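/- arXiv:2112.11320 — 7 statements merged into one kernel-verified Lean document; each statement's English description precedes it below -/
import Mathlib

section
/- Suppose b = (b_1,…,b_M) is a minimax-loss bid vector in the multi-unit pay-as-bid auction, i.e., b minimizes L^PAB over all bid vectors. Then the conditional regrets at all quantities are equal: R_k(b) = R_{k'}(b) for all k, k' ∈ {0, 1, …, M}. -/
set_option maxHeartbeats 1000000


noncomputable section

/-- Positive part `(x)₊ = max(x,0)`. -/
def pos (x : ℝ) : ℝ := max x 0

/-- A bid vector for `M` units: weakly decreasing on `{1,…,M}` and nonnegative at `M`. -/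
def IsBid (M : ℕ) (b : ℕ → ℝ) : Prop :=
  (∀ k, 1 ≤ k → k < M → b (k + 1) ≤ b k) ∧ 0 ≤ b M

/-- A value vector for `M` units: weakly decreasing on `{1,…,M}` and nonnegative at `M`. -/
def IsVal (M : ℕ) (v : ℕ → ℝ) : Prop :=
  (∀ k, 1 ≤ k → k < M → v (k + 1) ≤ v k) ∧ 0 ≤ v M

/-- Extension of the bid vector by the convention `b_{M+1} = 0`. -/
def bext (M : ℕ) (b : ℕ → ℝ) (k : ℕ) : ℝ := if k ≤ M then b k else 0

/-- Conditional regret at quantity `k ∈ {0,…,M}` in the multi-unit pay-as-bid auction: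
`R_k(b) = Σ_{j=1}^k (b_j − b_{k+1}) + Σ_{j=k+1}^M (v_j − b_{k+1})₊`. -/
def Rpab (M : ℕ) (v b : ℕ → ℝ) (k : ℕ) : ℝ :=
  (∑ j ∈ Finset.Icc 1 k, (b j - bext M b (k + 1)))
    + ∑ j ∈ Finset.Icc (k + 1) M, pos (v j - bext M b (k + 1))

/-- Maximum loss in the multi-unit pay-as-bid auction: `L^PAB(b) = max_{0 ≤ k ≤ M} R_k(b)`. -/
def Lpab (M : ℕ) (v b : ℕ → ℝ) : ℝ :=
  (Finset.Icc 0 M).sup' (Finset.nonempty_Icc.mpr (Nat.zero_le M)) (Rpab M v b)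

/-- A minimax-loss bid in the multi-unit pay-as-bid auction. -/
def IsMinimaxPAB (M : ℕ) (v b : ℕ → ℝ) : Prop :=
  IsBid M b ∧ ∀ b', IsBid M b' → Lpab M v b ≤ Lpab M v b'

namespace PABaux

lemma pos_nonneg (x : ℝ) : 0 ≤ pos x := le_max_right _ _

lemma pos_of_nonneg {x : ℝ} (h : 0 ≤ x) : pos x = x := max_eq_left h

lemma pos_pos {x : ℝ} (h : pos x ≠ 0) : 0 < x := by
  by_contra hc
  exact h (max_eq_right (by linarith))

lemma pos_mono {x y : ℝ} (h : x ≤ y) : pos x ≤ pos y := max_le_max h le_rfl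

lemma pos_sub_le (x d : ℝ) : pos (x - d) ≤ pos x + pos (-d) := by
  unfold pos
  have h1 : x - d ≤ max x 0 + max (-d) 0 := by
    have := le_max_left x 0; have := le_max_left (-d) 0; linarith
  have h2 : (0:ℝ) ≤ max x 0 + max (-d) 0 := by
    have := le_max_right x 0; have := le_max_right (-d) 0; linarith
  exact max_le h1 h2

lemma pos_smul {ε y : ℝ} (hε : 0 ≤ ε) : pos (ε * y) = ε * pos y := by
  unfold pos
  rcases le_total y 0 with h | h
  · rw [max_eq_right h, max_eq_right (by nlinarith), mul_zero]
  · rw [max_eq_left h, max_eq_left (by nlinarith)]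

lemma bid_mono {M : ℕ} {b : ℕ → ℝ} (hb : IsBid M b) {i j : ℕ}
    (hi : 1 ≤ i) (hij : i ≤ j) (hj : j ≤ M) : b j ≤ b i := by
  induction j, hij using Nat.le_induction with
  | base => exact le_refl _
  | succ j hj' ih =>
      exact le_trans (hb.1 j (le_trans hi hj') (by omega)) (ih (by omega))

lemma bid_nonneg {M : ℕ} {b : ℕ → ℝ} (hb : IsBid M b) {j : ℕ}
    (hj : 1 ≤ j) (hjM : j ≤ M) : 0 ≤ b j :=
  le_trans hb.2 (bid_mono hb hj hjM le_rfl)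

lemma bext_le_bid {M : ℕ} {b : ℕ → ℝ} (hb : IsBid M b) {j k : ℕ}
    (hj : 1 ≤ j) (hjk : j ≤ k) (hkM : k ≤ M) : bext M b (k+1) ≤ b j := by
  unfold bext
  split
  · exact bid_mono hb hj (by omega) (by omega)
  · exact bid_nonneg hb hj (le_trans hjk hkM)

lemma Rpab_nonneg {M : ℕ} {v b : ℕ → ℝ} (hb : IsBid M b) {k : ℕ} (hk : k ≤ M) :
    0 ≤ Rpab M v b k := by
  unfold Rpab
  have h1 : 0 ≤ ∑ j ∈ Finset.Icc 1 k, (b j - bext M b (k + 1)) := by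
    apply Finset.sum_nonneg
    intro j hj
    rw [Finset.mem_Icc] at hj
    have := bext_le_bid hb hj.1 (le_trans hj.2 le_rfl) hk
    linarith
  have h2 : 0 ≤ ∑ j ∈ Finset.Icc (k + 1) M, pos (v j - bext M b (k + 1)) :=
    Finset.sum_nonneg fun j _ => pos_nonneg _
  linarith

lemma R_le_L {M : ℕ} {v b : ℕ → ℝ} {k : ℕ} (hk : k ≤ M) :
    Rpab M v b k ≤ Lpab M v b :=
  Finset.le_sup' _ (Finset.mem_Icc.mpr ⟨Nat.zero_le _, hk⟩)

/-- Propagation: if the (extended) prices at `m+1` and `m+2` coincide then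
`R_{m+1} ≤ R_m`. -/
lemma prop_lemma {M : ℕ} {v b : ℕ → ℝ} {m : ℕ} (hm : m + 1 ≤ M)
    (heq : bext M b (m+1) = bext M b (m+2)) :
    Rpab M v b (m+1) ≤ Rpab M v b m := by
  unfold Rpab
  rw [heq]
  have hsplit1 : ∑ j ∈ Finset.Icc 1 (m+1), (b j - bext M b (m+2))
      = (∑ j ∈ Finset.Icc 1 m, (b j - bext M b (m+2))) + (b (m+1) - bext M b (m+2)) := by
    exact Finset.sum_Icc_succ_top (by omega) _
  have hmem : bext M b (m+1) = b (m+1) := if_pos hm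
  have hsplit2 : Finset.Icc (m+1) M = insert (m+1) (Finset.Icc (m+2) M) := by
    ext x; simp [Finset.mem_Icc, Finset.mem_insert]; omega
  rw [hsplit1, hsplit2, Finset.sum_insert (by simp [Finset.mem_Icc])]
  have : b (m+1) - bext M b (m+2) = 0 := by rw [← hmem, heq]; ring
  rw [this]
  have := pos_nonneg (v (m+1) - bext M b (m+2))
  linarith

/-- Uniform small-ε combinator. -/
lemma exists_uniform (s : Finset ℕ) (P : ℕ → ℝ → Prop)
    (h : ∀ k ∈ s, ∃ e, 0 < e ∧ ∀ ε : ℝ, 0 < ε → ε ≤ e → P k ε) :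
    ∃ e, 0 < e ∧ ∀ ε : ℝ, 0 < ε → ε ≤ e → ∀ k ∈ s, P k ε := by
  classical
  induction s using Finset.induction with
  | empty => exact ⟨1, one_pos, by simp⟩
  | @insert a s ha ih =>
      obtain ⟨e1, he1, h1⟩ := h a (Finset.mem_insert_self _ _)
      obtain ⟨e2, he2, h2⟩ := ih (fun k hk => h k (Finset.mem_insert_of_mem hk))
      refine ⟨min e1 e2, lt_min he1 he2, fun ε hε hεle k hk => ?_⟩
      rcases Finset.mem_insert.mp hk with rfl | hk
      · exact h1 ε hε (le_trans hεle (min_le_left _ _))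
      · exact h2 ε hε (le_trans hεle (min_le_right _ _)) k hk

/-- Perturbation formula for the conditional regret. -/
lemma Rpab_perturb (M : ℕ) (v b t : ℕ → ℝ) (ε : ℝ) (k : ℕ) :
    Rpab M v (fun j => b j + ε * t j) k
      = Rpab M v b k
        + ε * ((∑ j ∈ Finset.Icc 1 k, t j) - k * (if k + 1 ≤ M then t (k+1) else 0))
        + ∑ j ∈ Finset.Icc (k+1) M,
            (pos (v j - bext M b (k+1) - ε * (if k + 1 ≤ M then t (k+1) else 0))
              - pos (v j - bext M b (k+1))) := by
  set τ := (if k + 1 ≤ M then t (k+1) else 0) with hτ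
  set c := bext M b (k+1) with hc
  have hbe : bext M (fun j => b j + ε * t j) (k+1) = c + ε * τ := by
    rw [hc, hτ]; unfold bext; split <;> simp
  unfold Rpab
  rw [hbe, ← hc]
  have h1 : ∑ j ∈ Finset.Icc 1 k, ((fun j => b j + ε * t j) j - (c + ε * τ))
      = (∑ j ∈ Finset.Icc 1 k, (b j - c))
        + ε * ((∑ j ∈ Finset.Icc 1 k, t j) - (k : ℝ) * τ) := by
    have hpt : ∀ j ∈ Finset.Icc 1 k,
        (b j + ε * t j) - (c + ε * τ) = (b j - c) + (ε * t j - ε * τ) := by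
      intro j _; ring
    rw [Finset.sum_congr rfl hpt, Finset.sum_add_distrib]
    congr 1
    rw [Finset.sum_sub_distrib, ← Finset.mul_sum, Finset.sum_const, Nat.card_Icc,
      nsmul_eq_mul]
    simp only [Nat.add_sub_cancel]
    ring
  have h2 : ∑ j ∈ Finset.Icc (k+1) M, pos (v j - (c + ε * τ))
      = (∑ j ∈ Finset.Icc (k+1) M, pos (v j - c))
        + ∑ j ∈ Finset.Icc (k+1) M, (pos (v j - c - ε * τ) - pos (v j - c)) := by
    rw [← Finset.sum_add_distrib]
    apply Finset.sum_congr rfl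
    intro j _
    rw [show v j - (c + ε * τ) = v j - c - ε * τ by ring]
    ring
  rw [h1, h2]
  ring

/-- Nonpositive bound on the pos-difference sum when the price weakly increases. -/
lemma possum_nonpos {M : ℕ} {v : ℕ → ℝ} {c ε τ : ℝ} (hε : 0 ≤ ε) (hτ : 0 ≤ τ) (k : ℕ) :
    ∑ j ∈ Finset.Icc (k+1) M, (pos (v j - c - ε * τ) - pos (v j - c)) ≤ 0 := by
  apply Finset.sum_nonpos
  intro j _
  have : v j - c - ε * τ ≤ v j - c := by nlinarith
  have := pos_mono this
  linarith

/-- Strict bound with an "active" index. -/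
lemma possum_strict {M : ℕ} {v : ℕ → ℝ} {c ε τ : ℝ} (hε : 0 ≤ ε) (hτ : 0 ≤ τ) (k : ℕ)
    {j₀ : ℕ} (hj₀ : j₀ ∈ Finset.Icc (k+1) M) (hact : ε * τ ≤ v j₀ - c) :
    ∑ j ∈ Finset.Icc (k+1) M, (pos (v j - c - ε * τ) - pos (v j - c)) ≤ -(ε * τ) := by
  rw [← Finset.add_sum_erase _ _ hj₀]
  have h0 : pos (v j₀ - c - ε * τ) - pos (v j₀ - c) = -(ε * τ) := by
    rw [pos_of_nonneg (by nlinarith), pos_of_nonneg (by nlinarith)]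
    ring
  have hrest : ∑ j ∈ (Finset.Icc (k+1) M).erase j₀,
      (pos (v j - c - ε * τ) - pos (v j - c)) ≤ 0 := by
    apply Finset.sum_nonpos
    intro j _
    have : v j - c - ε * τ ≤ v j - c := by nlinarith
    have := pos_mono this
    linarith
  linarith [h0]

/-- Generic bound: when the price drops by `ε*s`, each pos-term rises by at most `ε*s`. -/
lemma possum_le {M : ℕ} {v : ℕ → ℝ} {c ε τ : ℝ} (hε : 0 ≤ ε) (k : ℕ) (hk : k ≤ M) :
    ∑ j ∈ Finset.Icc (k+1) M, (pos (v j - c - ε * τ) - pos (v j - c))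
      ≤ ((M : ℝ) - k) * (ε * pos (-τ)) := by
  have hcard : (Finset.Icc (k+1) M).card = M - k := by rw [Nat.card_Icc]; omega
  have hbd : ∀ j ∈ Finset.Icc (k+1) M,
      pos (v j - c - ε * τ) - pos (v j - c) ≤ ε * pos (-τ) := by
    intro j _
    have h1 := pos_sub_le (v j - c) (ε * τ)
    have h2 : pos (-(ε * τ)) = ε * pos (-τ) := by
      rw [show -(ε * τ) = ε * (-τ) by ring, pos_smul hε]
    linarith
  calc ∑ j ∈ Finset.Icc (k+1) M, (pos (v j - c - ε * τ) - pos (v j - c))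
      ≤ (Finset.Icc (k+1) M).card • (ε * pos (-τ)) := Finset.sum_le_card_nsmul _ _ _ hbd
    _ = ((M : ℝ) - k) * (ε * pos (-τ)) := by
        rw [nsmul_eq_mul, hcard, Nat.cast_sub hk]

/-- Feasibility of small perturbations respecting ties. -/
lemma exists_feasible {M : ℕ} (hM : 1 ≤ M) (b t : ℕ → ℝ) (hb : IsBid M b)
    (Hties : ∀ j, 1 ≤ j → j < M → b (j+1) = b j → t (j+1) ≤ t j)
    (HM : b M = 0 → 0 ≤ t M) :
    ∃ e, 0 < e ∧ ∀ ε : ℝ, 0 < ε → ε ≤ e → IsBid M (fun j => b j + ε * t j) := by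
  have key : ∀ j ∈ Finset.Icc 1 M, ∃ e, 0 < e ∧ ∀ ε : ℝ, 0 < ε → ε ≤ e →
      ((j < M → b (j+1) + ε * t (j+1) ≤ b j + ε * t j) ∧
       (j = M → 0 ≤ b M + ε * t M)) := by
    intro j hj
    rw [Finset.mem_Icc] at hj
    rcases lt_or_ge j M with hjM | hjM
    · -- j < M : monotonicity constraint
      rcases le_or_gt (t (j+1)) (t j) with hts | hts
      · refine ⟨1, one_pos, fun ε hε _ => ⟨fun _ => ?_, fun hjeq => by omega⟩⟩
        have hble := hb.1 j hj.1 hjM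
        nlinarith
      · have hbne : b (j+1) ≠ b j := fun h => absurd (Hties j hj.1 hjM h) (not_le.mpr hts)
        have hblt : b (j+1) < b j := lt_of_le_of_ne (hb.1 j hj.1 hjM) hbne
        refine ⟨(b j - b (j+1)) / (t (j+1) - t j), div_pos (by linarith) (by linarith), fun ε hε hεe => ⟨fun _ => ?_, fun hjeq => by omega⟩⟩
        have : ε * (t (j+1) - t j) ≤ b j - b (j+1) := by
          rw [← le_div_iff₀ (by linarith)] at *
          · exact hεe
        nlinarith
    · -- j = M : nonnegativity constraint
      have hjM' : j = M := le_antisymm hj.2 hjM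
      subst hjM'
      rcases le_or_gt 0 (t j) with hts | hts
      · exact ⟨1, one_pos, fun ε hε _ => ⟨fun h => by omega, fun _ => by nlinarith [hb.2]⟩⟩
      · have hbpos : 0 < b j := by
          rcases lt_or_eq_of_le hb.2 with h | h
          · exact h
          · exact absurd (HM h.symm) (not_le.mpr hts)
        refine ⟨b j / (-(t j)), div_pos hbpos (by linarith), fun ε hε hεe => ⟨fun h => by omega, fun _ => ?_⟩⟩
        have : ε * (-(t j)) ≤ b j := by
          rw [← le_div_iff₀ (by linarith)] at *
          · exact hεe
        nlinarith
  obtain ⟨e, he, hprop⟩ := exists_uniform (Finset.Icc 1 M) _ key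
  refine ⟨e, he, fun ε hε hεe => ⟨fun k hk hkM => ?_, ?_⟩⟩
  · exact (hprop ε hε hεe k (Finset.mem_Icc.mpr ⟨hk, by omega⟩)).1 hkM
  · exact (hprop ε hε hεe M (Finset.mem_Icc.mpr ⟨hM, le_rfl⟩)).2 rfl

/-- Case I: if the regret at quantity `M` is below the maximal loss, the bid can be improved. -/
lemma lemmaI {M : ℕ} (hM : 1 ≤ M) {v b : ℕ → ℝ} (hv : IsVal M v) (hb : IsBid M b)
    (hL : 0 < Lpab M v b) (hRM : Rpab M v b M ≠ Lpab M v b) :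
    ∃ b', IsBid M b' ∧ Lpab M v b' < Lpab M v b := by
  classical
  set L := Lpab M v b with hLdef
  set A : Finset ℕ := (Finset.Icc 0 M).filter (fun l => Rpab M v b l = L) with hA
  have hAne : A.Nonempty := by
    obtain ⟨x, hx, hxe⟩ := Finset.exists_mem_eq_sup'
      (Finset.nonempty_Icc.mpr (Nat.zero_le M)) (Rpab M v b)
    exact ⟨x, Finset.mem_filter.mpr ⟨hx, hxe.symm⟩⟩
  set kA := A.max' hAne with hkAdef
  have hkAmem : kA ∈ Finset.filter (fun l => Rpab M v b l = L) (Finset.Icc 0 M) :=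
    A.max'_mem hAne
  rw [Finset.mem_filter, Finset.mem_Icc] at hkAmem
  have hkAM : kA < M := by
    rcases lt_or_eq_of_le hkAmem.1.2 with h | h
    · exact h
    · exact absurd (h ▸ hkAmem.2) hRM
  have hAmax : ∀ l, l ≤ M → Rpab M v b l = L → l ≤ kA := fun l hl he =>
    A.le_max' l (Finset.mem_filter.mpr ⟨Finset.mem_Icc.mpr ⟨Nat.zero_le _, hl⟩, he⟩)
  set ρ : ℝ := (M : ℝ) + 2 with hρdef
  have hρ1 : (2:ℝ) ≤ ρ := by
    have : (0:ℝ) ≤ (M:ℝ) := Nat.cast_nonneg M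
    rw [hρdef]; linarith
  -- run top within [1, kA+1]
  set T : ℕ → ℕ := fun j =>
    (insert j ((Finset.Icc j (kA+1)).filter (fun l => b l = b j))).max'
      (Finset.insert_nonempty _ _) with hTdef
  have hTmem : ∀ j, T j = j ∨ (j ≤ T j ∧ T j ≤ kA + 1 ∧ b (T j) = b j) := by
    intro j
    have := (insert j ((Finset.Icc j (kA+1)).filter (fun l => b l = b j))).max'_mem
      (Finset.insert_nonempty _ _)
    rcases Finset.mem_insert.mp this with h | h
    · exact Or.inl h
    · rw [Finset.mem_filter, Finset.mem_Icc] at h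
      exact Or.inr ⟨h.1.1, h.1.2, h.2⟩
  have hTge : ∀ j, j ≤ T j := by
    intro j
    exact Finset.le_max' _ j (Finset.mem_insert_self _ _)
  have hTb : ∀ j, b (T j) = b j := by
    intro j; rcases hTmem j with h | h
    · rw [h]
    · exact h.2.2
  have hTle : ∀ j, j ≤ kA + 1 → T j ≤ kA + 1 := by
    intro j hj
    apply Finset.max'_le
    intro y hy
    rcases Finset.mem_insert.mp hy with rfl | hy
    · exact hj
    · exact (Finset.mem_Icc.mp (Finset.mem_filter.mp hy).1).2
  have hTub : ∀ j l, j ≤ l → l ≤ kA + 1 → b l = b j → l ≤ T j := by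
    intro j l hjl hl hbl
    exact Finset.le_max' _ l (Finset.mem_insert_of_mem
      (Finset.mem_filter.mpr ⟨Finset.mem_Icc.mpr ⟨hjl, hl⟩, hbl⟩))
  have hTeq : ∀ j j', j ≤ j' → j' ≤ kA + 1 → b j = b j' → T j = T j' := by
    intro j j' hjj' hj' hbe
    have h1 : T j' ≤ T j :=
      hTub j (T j') (le_trans hjj' (hTge j')) (hTle j' hj') (by rw [hTb j', ← hbe])
    have h2 : T j ≤ T j' := by
      apply hTub j' (T j) (hTub j j' hjj' hj' hbe.symm) (hTle j (le_trans hjj' hj'))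
      rw [hTb j, hbe]
    omega
  set N : ℕ → ℕ := fun j =>
    ((Finset.Icc 0 (T j - 1)).filter (fun l => Rpab M v b l = L)).card with hNdef
  set t : ℕ → ℝ := fun j => if 1 ≤ j ∧ j ≤ kA + 1 then ρ ^ (N j) else 0 with htdef
  have ht_eq : ∀ j, 1 ≤ j → j ≤ kA + 1 → t j = ρ ^ (N j) := by
    intro j h1 h2; rw [htdef]; exact if_pos ⟨h1, h2⟩
  have ht_zero : ∀ j, kA + 1 < j → t j = 0 := by
    intro j h; rw [htdef]; exact if_neg (by omega)
  have ht_nonneg : ∀ j, 0 ≤ t j := by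
    intro j
    by_cases h : 1 ≤ j ∧ j ≤ kA + 1
    · rw [ht_eq j h.1 h.2]; positivity
    · have : t j = if 1 ≤ j ∧ j ≤ kA + 1 then ρ ^ (N j) else 0 := rfl
      rw [this, if_neg h]
  -- feasibility
  obtain ⟨e₂, he₂, hfeas⟩ := exists_feasible hM b t hb
    (by
      intro j h1 hjM hbe
      by_cases hj1 : j + 1 ≤ kA + 1
      · rw [ht_eq j h1 (by omega), ht_eq (j+1) (by omega) hj1]
        have : T j = T (j+1) := hTeq j (j+1) (by omega) hj1 hbe.symm
        rw [hNdef]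
        simp only [this]
        exact le_rfl
      · rw [ht_zero (j+1) (by omega)]; exact ht_nonneg j)
    (fun _ => ht_nonneg M)
  -- per-quantity decrease
  have key : ∀ k ∈ Finset.Icc 0 M, ∃ e, 0 < e ∧ ∀ ε : ℝ, 0 < ε → ε ≤ e →
      Rpab M v (fun j => b j + ε * t j) k < L := by
    intro k hkmem
    rw [Finset.mem_Icc] at hkmem
    have hkM := hkmem.2
    by_cases hkA : Rpab M v b k = L
    · -- k is a maximizer
      have hkkA : k ≤ kA := hAmax k hkM hkA
      have hk1M : k + 1 ≤ M := by omega
      have hτval : (if k + 1 ≤ M then t (k+1) else 0) = ρ ^ (N (k+1)) := by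
        rw [if_pos hk1M]; exact ht_eq (k+1) (by omega) (by omega)
      have hτ1 : (1:ℝ) ≤ ρ ^ (N (k+1)) := one_le_pow₀ (by linarith)
      have hc : bext M b (k+1) = b (k+1) := if_pos hk1M
      -- run bottom of k+1 (within [1, k+1])
      set i := (insert (k+1) ((Finset.Icc 1 (k+1)).filter (fun l => b l = b (k+1)))).min'
        ⟨k+1, Finset.mem_insert_self _ _⟩ with hidef
      have himem : i = k + 1 ∨ (1 ≤ i ∧ i ≤ k + 1 ∧ b i = b (k+1)) := by
        have := (insert (k+1) ((Finset.Icc 1 (k+1)).filter (fun l => b l = b (k+1)))).min'_mem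
          ⟨k+1, Finset.mem_insert_self _ _⟩
        rcases Finset.mem_insert.mp this with h | h
        · exact Or.inl h
        · rw [Finset.mem_filter, Finset.mem_Icc] at h
          exact Or.inr ⟨h.1.1, h.1.2, h.2⟩
      have hi1 : 1 ≤ i := by rcases himem with h | h; omega; exact h.1
      have hile : i ≤ k + 1 := by
        exact Finset.min'_le _ _ (Finset.mem_insert_self _ _)
      have hib : b i = b (k+1) := by rcases himem with h | h; rw [h]; exact h.2.2
      have himin : ∀ l, 1 ≤ l → l ≤ k + 1 → b l = b (k+1) → i ≤ l := by
        intro l h1 h2 hbl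
        exact Finset.min'_le _ l (Finset.mem_insert_of_mem
          (Finset.mem_filter.mpr ⟨Finset.mem_Icc.mpr ⟨h1, h2⟩, hbl⟩))
      have hsqueeze : ∀ j, i ≤ j → j ≤ k + 1 → b j = b (k+1) := by
        intro j hij hjk
        have h1 : b j ≤ b i := bid_mono hb hi1 hij (by omega)
        have h2 : b (k+1) ≤ b j := bid_mono hb (by omega) hjk hk1M
        rw [hib] at h1
        linarith
      have htsame : ∀ j, i ≤ j → j ≤ k → t j = ρ ^ (N (k+1)) := by
        intro j hij hjk
        rw [ht_eq j (by omega) (by omega)]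
        have : T j = T (k+1) := hTeq j (k+1) (by omega) (by omega)
          (hsqueeze j hij (by omega))
        rw [hNdef]; simp only [this]
      by_cases hi2 : 2 ≤ i
      · -- L1 : strictly decreasing linear part
        refine ⟨1, one_pos, fun ε hε hεe => ?_⟩
        rw [Rpab_perturb, hτval]
        have hposs := possum_nonpos (M := M) (v := v) (c := bext M b (k+1))
          (le_of_lt hε) (by positivity : (0:ℝ) ≤ ρ ^ (N (k+1))) k
        -- bound the linear part
        have hNlt : ∀ j, 1 ≤ j → j ≤ i - 1 → N j + 1 ≤ N (k+1) := by
          intro j h1 h2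
          have hTj : T j ≤ i - 1 := by
            by_contra hcon
            have hiTj : i ≤ T j := by omega
            have hTjle : T j ≤ kA + 1 := hTle j (by omega)
            have hb1 : b (T j) ≤ b i := bid_mono hb hi1 hiTj (by omega)
            have hb2 : b i ≤ b j := bid_mono hb h1 (by omega) (by omega)
            have hbj : b j = b (k+1) := by
              have := hTb j
              rw [hib] at hb1
              linarith
            exact absurd (himin j h1 (by omega) hbj) (by omega)
          have hsub : N j ≤ ((Finset.Icc 0 (k-1)).filter
              (fun l => Rpab M v b l = L)).card := by
            apply Finset.card_le_card
            apply Finset.filter_subset_filter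
            apply Finset.Icc_subset_Icc le_rfl
            omega
          have hins : ((Finset.Icc 0 (k-1)).filter (fun l => Rpab M v b l = L)).card + 1
              ≤ N (k+1) := by
            have hsub2 : insert k ((Finset.Icc 0 (k-1)).filter (fun l => Rpab M v b l = L))
                ⊆ (Finset.Icc 0 (T (k+1) - 1)).filter (fun l => Rpab M v b l = L) := by
              intro x hx
              rcases Finset.mem_insert.mp hx with h | hx
              · rw [h]
                refine Finset.mem_filter.mpr ⟨Finset.mem_Icc.mpr ⟨Nat.zero_le _, ?_⟩, hkA⟩
                have := hTge (k+1); omega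
              · rw [Finset.mem_filter, Finset.mem_Icc] at hx
                refine Finset.mem_filter.mpr ⟨Finset.mem_Icc.mpr ⟨Nat.zero_le _, ?_⟩, hx.2⟩
                have := hTge (k+1); omega
            have hknot : k ∉ (Finset.Icc 0 (k-1)).filter (fun l => Rpab M v b l = L) := by
              intro hcon
              rw [Finset.mem_filter, Finset.mem_Icc] at hcon
              omega
            have := Finset.card_le_card hsub2
            rw [Finset.card_insert_of_notMem hknot] at this
            exact this
          omega
        have hsum1 : ∑ j ∈ Finset.Icc 1 (i-1), t j ≤ ((i:ℝ) - 1) * (ρ ^ (N (k+1)) / ρ) := by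
          have hbd : ∀ j ∈ Finset.Icc 1 (i-1), t j ≤ ρ ^ (N (k+1)) / ρ := by
            intro j hj
            rw [Finset.mem_Icc] at hj
            rw [ht_eq j hj.1 (by omega)]
            rw [le_div_iff₀ (by linarith)]
            calc ρ ^ (N j) * ρ = ρ ^ (N j + 1) := by ring
              _ ≤ ρ ^ (N (k+1)) := pow_le_pow_right₀ (by linarith) (hNlt j hj.1 hj.2)
          calc ∑ j ∈ Finset.Icc 1 (i-1), t j
              ≤ (Finset.Icc 1 (i-1)).card • (ρ ^ (N (k+1)) / ρ) :=
                Finset.sum_le_card_nsmul _ _ _ hbd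
            _ = ((i:ℝ) - 1) * (ρ ^ (N (k+1)) / ρ) := by
                rw [nsmul_eq_mul, Nat.card_Icc]
                congr 1
                have : i - 1 + 1 - 1 = i - 1 := by omega
                rw [this, Nat.cast_sub hi1]
                norm_num
        have hsum2 : ∑ j ∈ Finset.Icc i k, t j = ((k:ℝ) + 1 - i) * ρ ^ (N (k+1)) := by
          calc ∑ j ∈ Finset.Icc i k, t j
              = ∑ _j ∈ Finset.Icc i k, ρ ^ (N (k+1)) := Finset.sum_congr rfl (fun j hj => by
                rw [Finset.mem_Icc] at hj; exact htsame j hj.1 hj.2)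
            _ = ((k:ℝ) + 1 - i) * ρ ^ (N (k+1)) := by
                rw [Finset.sum_const, nsmul_eq_mul, Nat.card_Icc, Nat.cast_sub hile]
                push_cast
                ring
        have hsplit : ∑ j ∈ Finset.Icc 1 k, t j
            = (∑ j ∈ Finset.Icc 1 (i-1), t j) + ∑ j ∈ Finset.Icc i k, t j := by
          rw [← Finset.sum_union (by
            rw [Finset.disjoint_left]
            intro x hx1 hx2
            rw [Finset.mem_Icc] at hx1 hx2
            omega)]
          congr 1
          ext x
          simp only [Finset.mem_union, Finset.mem_Icc]
          omega
        have hlin : (∑ j ∈ Finset.Icc 1 k, t j) - (k:ℝ) * ρ ^ (N (k+1)) ≤ -(1/2) := by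
          rw [hsplit]
          have hii : (1:ℝ) ≤ (i:ℝ) - 1 := by
            have : (2:ℝ) ≤ (i:ℝ) := by exact_mod_cast hi2
            linarith
          have hdiv : ρ ^ (N (k+1)) / ρ * ρ = ρ ^ (N (k+1)) := by
            field_simp
          have hq0 : (0:ℝ) ≤ ρ ^ (N (k+1)) / ρ := by positivity
          have h2q : 2 * (ρ ^ (N (k+1)) / ρ) ≤ ρ ^ (N (k+1)) := by nlinarith [hdiv, hq0, hρ1]
          have hgap : ρ ^ (N (k+1)) / ρ - ρ ^ (N (k+1)) ≤ -(1/2) := by linarith [hτ1]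
          have hprod := mul_le_mul_of_nonneg_left hgap (by linarith : (0:ℝ) ≤ (i:ℝ) - 1)
          nlinarith [hsum1, hsum2, hprod, hii]
        rw [hkA]
        have hmul := mul_le_mul_of_nonneg_left hlin hε.le
        linarith [hposs, hε]
      · -- L2 : run reaches the bottom; use an active value
        have hi1' : i = 1 := by omega
        have htall : ∀ j ∈ Finset.Icc 1 k, t j = ρ ^ (N (k+1)) := by
          intro j hj
          rw [Finset.mem_Icc] at hj
          exact htsame j (by omega) hj.2
        have hlin0 : (∑ j ∈ Finset.Icc 1 k, t j) - (k:ℝ) * ρ ^ (N (k+1)) = 0 := by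
          rw [Finset.sum_congr rfl htall, Finset.sum_const, nsmul_eq_mul, Nat.card_Icc]
          simp only [Nat.add_sub_cancel]
          ring
        -- the bid-difference part of R_k vanishes
        have hbzero : ∑ j ∈ Finset.Icc 1 k, (b j - bext M b (k+1)) = 0 := by
          apply Finset.sum_eq_zero
          intro j hj
          rw [Finset.mem_Icc] at hj
          rw [hc, hsqueeze j (by omega) (by omega)]
          ring
        have hpsum : ∑ j ∈ Finset.Icc (k+1) M, pos (v j - bext M b (k+1)) = L := by
          have : Rpab M v b k = _ + _ := rfl
          rw [← hkA]
          unfold Rpab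
          rw [hbzero]; ring
        obtain ⟨j₀, hj₀mem, hj₀⟩ : ∃ j₀ ∈ Finset.Icc (k+1) M,
            pos (v j₀ - bext M b (k+1)) ≠ 0 := by
          apply Finset.exists_ne_zero_of_sum_ne_zero
          rw [hpsum]; exact ne_of_gt hL
        have hact : 0 < v j₀ - bext M b (k+1) := pos_pos hj₀
        refine ⟨(v j₀ - bext M b (k+1)) / ρ ^ (N (k+1)), div_pos hact (by positivity),
          fun ε hε hεe => ?_⟩
        rw [Rpab_perturb, hτval, hlin0, mul_zero]
        have hετ : ε * ρ ^ (N (k+1)) ≤ v j₀ - bext M b (k+1) := by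
          rw [← le_div_iff₀ (by positivity : (0:ℝ) < ρ ^ (N (k+1)))]
          exact hεe
        have := possum_strict (M := M) (v := v) (c := bext M b (k+1)) (le_of_lt hε)
          (by positivity : (0:ℝ) ≤ ρ ^ (N (k+1))) k hj₀mem hετ
        have hτpos : 0 < ε * ρ ^ (N (k+1)) := by positivity
        rw [hkA]
        linarith
    · -- k is not a maximizer : continuity bound
      have hkL : Rpab M v b k < L := lt_of_le_of_ne (R_le_L hkM) hkA
      set S := ∑ j ∈ Finset.Icc 1 M, |t j| with hSdef
      have hS0 : 0 ≤ S := Finset.sum_nonneg fun j _ => abs_nonneg _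
      set K := (2*(M:ℝ)+1) * S + 1 with hKdef
      have hKpos : 0 < K := by
        have : (0:ℝ) ≤ (M:ℝ) := Nat.cast_nonneg M
        rw [hKdef]; nlinarith
      refine ⟨(L - Rpab M v b k)/K, div_pos (by linarith) hKpos, fun ε hε hεe => ?_⟩
      rw [Rpab_perturb]
      set τ := (if k + 1 ≤ M then t (k+1) else 0) with hτd
      have hτabs : |τ| ≤ S := by
        rw [hτd]
        split
        · exact Finset.single_le_sum (f := fun j => |t j|) (fun j _ => abs_nonneg _)
            (Finset.mem_Icc.mpr ⟨by omega, by omega⟩)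
        · simpa using hS0
      have hlin : (∑ j ∈ Finset.Icc 1 k, t j) - (k:ℝ) * τ ≤ (1 + (M:ℝ)) * S := by
        have h1 : ∑ j ∈ Finset.Icc 1 k, t j ≤ S := by
          calc ∑ j ∈ Finset.Icc 1 k, t j ≤ ∑ j ∈ Finset.Icc 1 k, |t j| :=
              Finset.sum_le_sum fun j _ => le_abs_self _
            _ ≤ S := Finset.sum_le_sum_of_subset_of_nonneg
              (Finset.Icc_subset_Icc le_rfl hkM) (fun j _ _ => abs_nonneg _)
        have h2 : -((k:ℝ) * τ) ≤ (M:ℝ) * S := by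
          have hk' : (k:ℝ) ≤ (M:ℝ) := by exact_mod_cast hkM
          have := neg_abs_le τ
          have hkn : (0:ℝ) ≤ (k:ℝ) := Nat.cast_nonneg k
          nlinarith
        linarith
      have hpos : ∑ j ∈ Finset.Icc (k+1) M,
          (pos (v j - bext M b (k+1) - ε * τ) - pos (v j - bext M b (k+1)))
          ≤ (M:ℝ) * (ε * S) := by
        have h1 := possum_le (M := M) (v := v) (c := bext M b (k+1)) (ε := ε) (τ := τ)
          (le_of_lt hε) k hkM
        have h2 : pos (-τ) ≤ S := by
          have habs : pos (-τ) ≤ |τ| := by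
            unfold pos
            rcases le_total τ 0 with h | h
            · rw [max_eq_left (by linarith), abs_of_nonpos h]
            · rw [max_eq_right (by linarith)]
              exact abs_nonneg τ
          linarith [hτabs]
        have hk' : (0:ℝ) ≤ (M:ℝ) - k := by
          have : (k:ℝ) ≤ (M:ℝ) := by exact_mod_cast hkM
          linarith
        have hM' : (M:ℝ) - k ≤ (M:ℝ) := by
          have : (0:ℝ) ≤ (k:ℝ) := Nat.cast_nonneg k
          linarith
        have h3 : ((M:ℝ) - k) * (ε * pos (-τ)) ≤ ((M:ℝ) - k) * (ε * S) :=
          mul_le_mul_of_nonneg_left (mul_le_mul_of_nonneg_left h2 hε.le) hk'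
        have h4 : ((M:ℝ) - k) * (ε * S) ≤ (M:ℝ) * (ε * S) :=
          mul_le_mul_of_nonneg_right hM' (mul_nonneg hε.le hS0)
        linarith [h1]
      have hεK : ε * K ≤ L - Rpab M v b k := by
        rw [← le_div_iff₀ hKpos]; exact hεe
      have : ε * ((∑ j ∈ Finset.Icc 1 k, t j) - (k:ℝ) * τ) ≤ ε * ((1 + (M:ℝ)) * S) :=
        mul_le_mul_of_nonneg_left hlin hε.le
      rw [hKdef] at hεK
      nlinarith [hpos, hε.le, hS0]
  -- assemble
  obtain ⟨e₁, he₁, hdec⟩ := exists_uniform (Finset.Icc 0 M) _ key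
  set ε := min e₁ e₂ with hεdef
  have hεpos : 0 < ε := lt_min he₁ he₂
  refine ⟨fun j => b j + ε * t j, hfeas ε hεpos (min_le_right _ _), ?_⟩
  rw [hLdef]
  unfold Lpab
  rw [Finset.sup'_lt_iff]
  intro k hk
  exact hdec ε hεpos (min_le_left _ _) k hk

/-- Case II: if the regrets strictly above `k0` are all maximal but `R_{k0}` is not,
the bid can be modified so that the loss does not increase and `R_M` drops below it. -/
lemma lemmaII {M : ℕ} (hM : 1 ≤ M) {v b : ℕ → ℝ} (hv : IsVal M v) (hb : IsBid M b)
    (hL : 0 < Lpab M v b) {k0 : ℕ} (hk0M : k0 < M)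
    (hk0 : Rpab M v b k0 ≠ Lpab M v b)
    (habove : ∀ l, k0 < l → l ≤ M → Rpab M v b l = Lpab M v b) :
    ∃ b', IsBid M b' ∧ Lpab M v b' ≤ Lpab M v b ∧ Rpab M v b' M < Lpab M v b := by
  classical
  set L := Lpab M v b with hLdef
  set ρ : ℝ := (M : ℝ) + 2 with hρdef
  have hρ1 : (2:ℝ) ≤ ρ := by
    have : (0:ℝ) ≤ (M:ℝ) := Nat.cast_nonneg M
    rw [hρdef]; linarith
  -- strict gap between b (k0+1) and the next price
  have hgap : bext M b (k0+2) < b (k0+1) := by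
    have hne : bext M b (k0+1) ≠ bext M b (k0+2) := by
      intro heq
      have hRle := prop_lemma (v := v) (m := k0) (by omega) heq
      have hR1 : Rpab M v b (k0+1) = L := habove (k0+1) (by omega) (by omega)
      have : Rpab M v b k0 = L :=
        le_antisymm (R_le_L (by omega)) (by rw [← hR1]; exact hRle)
      exact hk0 this
    have heq1 : bext M b (k0+1) = b (k0+1) := if_pos (by omega)
    have hle : bext M b (k0+2) ≤ bext M b (k0+1) := by
      unfold bext
      by_cases h2 : k0 + 2 ≤ M
      · rw [if_pos h2, if_pos (by omega)]
        exact hb.1 (k0+1) (by omega) (by omega)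
      · rw [if_neg h2, if_pos (by omega)]
        exact bid_nonneg hb (by omega) (by omega)
    rw [heq1] at hne hle
    exact lt_of_le_of_ne hle (Ne.symm hne)
  have hbext2 : 0 ≤ bext M b (k0+2) := by
    unfold bext
    split
    · exact bid_nonneg hb (by omega) (by assumption)
    · exact le_rfl
  have hbk01 : 0 < b (k0+1) := lt_of_le_of_lt hbext2 hgap
  -- last index with a positive bid, within [k0+1, M]
  have hZSne : ((Finset.Icc (k0+1) M).filter (fun l => 0 < b l)).Nonempty :=
    ⟨k0+1, Finset.mem_filter.mpr ⟨Finset.mem_Icc.mpr ⟨le_rfl, by omega⟩, hbk01⟩⟩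
  set Z := ((Finset.Icc (k0+1) M).filter (fun l => 0 < b l)).max' hZSne with hZdef
  have hZmem : Z ∈ (Finset.Icc (k0+1) M).filter (fun l => 0 < b l) :=
    Finset.max'_mem _ hZSne
  rw [Finset.mem_filter, Finset.mem_Icc] at hZmem
  have hZ1 : k0 + 1 ≤ Z := hZmem.1.1
  have hZM : Z ≤ M := hZmem.1.2
  have hbZ : 0 < b Z := hZmem.2
  have hzero : ∀ l, Z < l → l ≤ M → b l = 0 := by
    intro l h1 h2
    by_contra hc
    have hbl : 0 < b l := lt_of_le_of_ne (bid_nonneg hb (by omega) h2) (Ne.symm hc)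
    have hmem : l ∈ (Finset.Icc (k0+1) M).filter (fun l => 0 < b l) :=
      Finset.mem_filter.mpr ⟨Finset.mem_Icc.mpr ⟨by omega, h2⟩, hbl⟩
    have := Finset.le_max' _ l hmem
    omega
  -- run bottom (clipped at k0+1)
  set B : ℕ → ℕ := fun j =>
    (insert j ((Finset.Icc (k0+1) j).filter (fun l => b l = b j))).min'
      ⟨j, Finset.mem_insert_self _ _⟩ with hBdef
  have hBle : ∀ j, B j ≤ j := fun j =>
    Finset.min'_le _ _ (Finset.mem_insert_self _ _)
  have hBmem : ∀ j, B j = j ∨ (k0 + 1 ≤ B j ∧ B j ≤ j ∧ b (B j) = b j) := by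
    intro j
    have := (insert j ((Finset.Icc (k0+1) j).filter (fun l => b l = b j))).min'_mem
      ⟨j, Finset.mem_insert_self _ _⟩
    rcases Finset.mem_insert.mp this with h | h
    · exact Or.inl h
    · rw [Finset.mem_filter, Finset.mem_Icc] at h
      exact Or.inr ⟨h.1.1, h.1.2, h.2⟩
  have hBge : ∀ j, k0 + 1 ≤ j → k0 + 1 ≤ B j := by
    intro j hj; rcases hBmem j with h | h; omega; exact h.1
  have hBb : ∀ j, b (B j) = b j := by
    intro j; rcases hBmem j with h | h; rw [h]; exact h.2.2
  have hBmin : ∀ j l, k0 + 1 ≤ l → l ≤ j → b l = b j → B j ≤ l := by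
    intro j l h1 h2 hbl
    exact Finset.min'_le _ l (Finset.mem_insert_of_mem
      (Finset.mem_filter.mpr ⟨Finset.mem_Icc.mpr ⟨h1, h2⟩, hbl⟩))
  have hBeq : ∀ j, k0 + 1 ≤ j → b (j+1) = b j → B (j+1) = B j := by
    intro j hj hbe
    have h1 : B (j+1) ≤ j := hBmin (j+1) j hj (by omega) hbe.symm
    have h2 : B j ≤ B (j+1) :=
      hBmin j (B (j+1)) (hBge (j+1) (by omega)) h1 (by rw [hBb (j+1), hbe])
    have h3 : B (j+1) ≤ B j :=
      hBmin (j+1) (B j) (hBge j hj) (by have := hBle j; omega) (by rw [hBb j, ← hbe])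
    omega
  set E : ℕ → ℕ := fun j => M - (B j - (k0+1)) with hEdef
  have hE : ∀ x, E x = M - (B x - (k0+1)) := fun x => rfl
  set t : ℕ → ℝ := fun j => if k0 + 1 ≤ j ∧ j ≤ Z then -(ρ ^ (E j)) else 0 with htdef
  have ht_eq : ∀ j, k0 + 1 ≤ j → j ≤ Z → t j = -(ρ ^ (E j)) := by
    intro j h1 h2
    have : t j = if k0 + 1 ≤ j ∧ j ≤ Z then -(ρ ^ (E j)) else 0 := rfl
    rw [this, if_pos ⟨h1, h2⟩]
  have ht_zero : ∀ j, ¬(k0 + 1 ≤ j ∧ j ≤ Z) → t j = 0 := by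
    intro j h
    have : t j = if k0 + 1 ≤ j ∧ j ≤ Z then -(ρ ^ (E j)) else 0 := rfl
    rw [this, if_neg h]
  have ht_nonpos : ∀ j, t j ≤ 0 := by
    intro j
    by_cases h : k0 + 1 ≤ j ∧ j ≤ Z
    · rw [ht_eq j h.1 h.2]
      have : (0:ℝ) ≤ ρ ^ (E j) := by positivity
      linarith
    · rw [ht_zero j h]
  -- feasibility
  obtain ⟨e₂, he₂, hfeas⟩ := exists_feasible hM b t hb
    (by
      intro j h1 hjM hbe
      by_cases hj1 : k0 + 1 ≤ j + 1 ∧ j + 1 ≤ Z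
      · by_cases hj0 : k0 + 1 ≤ j
        · rw [ht_eq j hj0 (by omega), ht_eq (j+1) hj1.1 hj1.2]
          have hBe := hBeq j hj0 hbe
          rw [hE, hE, hBe]
        · rw [ht_zero j (by omega)]
          exact ht_nonpos (j+1)
      · rw [ht_zero (j+1) hj1]
        by_cases hj0 : k0 + 1 ≤ j ∧ j ≤ Z
        · -- then j = Z, and a tie with the zero bid at Z+1 is impossible
          exfalso
          have hjZ : j = Z := by omega
          have := hzero (j+1) (by omega) (by omega)
          rw [this] at hbe
          rw [← hjZ] at hbZ
          linarith
        · rw [ht_zero j hj0])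
    (by
      intro hbM
      have hZlt : Z < M := by
        rcases lt_or_eq_of_le hZM with h | h
        · exact h
        · rw [h] at hbZ; linarith
      rw [ht_zero M (by omega)])
  -- per-quantity control
  have key : ∀ k ∈ Finset.Icc 0 M, ∃ e, 0 < e ∧ ∀ ε : ℝ, 0 < ε → ε ≤ e →
      ((k < k0 → Rpab M v (fun j => b j + ε * t j) k ≤ L) ∧
       (k0 ≤ k → Rpab M v (fun j => b j + ε * t j) k < L)) := by
    intro k hkmem
    rw [Finset.mem_Icc] at hkmem
    have hkM := hkmem.2
    rcases lt_trichotomy k k0 with hkk0 | hkk0 | hkk0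
    · -- k < k0 : nothing changes
      refine ⟨1, one_pos, fun ε hε hεe => ⟨fun _ => ?_, fun h => absurd h (by omega)⟩⟩
      rw [Rpab_perturb]
      have hτ0 : (if k + 1 ≤ M then t (k+1) else 0) = 0 := by
        rw [if_pos (by omega : k + 1 ≤ M)]
        exact ht_zero (k+1) (by omega)
      have hsum0 : ∑ j ∈ Finset.Icc 1 k, t j = 0 :=
        Finset.sum_eq_zero fun j hj => by
          rw [Finset.mem_Icc] at hj
          exact ht_zero j (by omega)
      rw [hτ0, hsum0]
      have hps : ∑ j ∈ Finset.Icc (k+1) M,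
          (pos (v j - bext M b (k+1) - ε * 0) - pos (v j - bext M b (k+1))) = 0 :=
        Finset.sum_eq_zero fun j _ => by rw [mul_zero, sub_zero]; ring
      rw [hps]
      have := R_le_L (M := M) (v := v) (b := b) hkM
      simpa using this
    · -- k = k0 : continuity
      subst hkk0
      have hkL : Rpab M v b k < L := lt_of_le_of_ne (R_le_L hkM) hk0
      set S := ∑ j ∈ Finset.Icc 1 M, |t j| with hSdef
      have hS0 : 0 ≤ S := Finset.sum_nonneg fun j _ => abs_nonneg _
      set K := (2*(M:ℝ)+1) * S + 1 with hKdef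
      have hKpos : 0 < K := by
        have : (0:ℝ) ≤ (M:ℝ) := Nat.cast_nonneg M
        rw [hKdef]; nlinarith
      refine ⟨(L - Rpab M v b k)/K, div_pos (by linarith) hKpos, fun ε hε hεe => ?_⟩
      have main : Rpab M v (fun j => b j + ε * t j) k < L := by
        rw [Rpab_perturb]
        set τ := (if k + 1 ≤ M then t (k+1) else 0) with hτd
        have hτabs : |τ| ≤ S := by
          rw [hτd]
          split
          · exact Finset.single_le_sum (f := fun j => |t j|) (fun j _ => abs_nonneg _)
              (Finset.mem_Icc.mpr ⟨by omega, by omega⟩)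
          · simpa using hS0
        have hlin : (∑ j ∈ Finset.Icc 1 k, t j) - (k:ℝ) * τ ≤ (1 + (M:ℝ)) * S := by
          have h1 : ∑ j ∈ Finset.Icc 1 k, t j ≤ S := by
            calc ∑ j ∈ Finset.Icc 1 k, t j ≤ ∑ j ∈ Finset.Icc 1 k, |t j| :=
                Finset.sum_le_sum fun j _ => le_abs_self _
              _ ≤ S := Finset.sum_le_sum_of_subset_of_nonneg
                (Finset.Icc_subset_Icc le_rfl hkM) (fun j _ _ => abs_nonneg _)
          have h2 : -((k:ℝ) * τ) ≤ (M:ℝ) * S := by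
            have hk' : (k:ℝ) ≤ (M:ℝ) := by exact_mod_cast hkM
            have := neg_abs_le τ
            have hkn : (0:ℝ) ≤ (k:ℝ) := Nat.cast_nonneg k
            nlinarith
          linarith
        have hpos : ∑ j ∈ Finset.Icc (k+1) M,
            (pos (v j - bext M b (k+1) - ε * τ) - pos (v j - bext M b (k+1)))
            ≤ (M:ℝ) * (ε * S) := by
          have h1 := possum_le (M := M) (v := v) (c := bext M b (k+1)) (ε := ε) (τ := τ)
            (le_of_lt hε) k hkM
          have h2 : pos (-τ) ≤ S := by
            have habs : pos (-τ) ≤ |τ| := by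
              unfold pos
              rcases le_total τ 0 with h | h
              · rw [max_eq_left (by linarith), abs_of_nonpos h]
              · rw [max_eq_right (by linarith)]
                exact abs_nonneg τ
            linarith [hτabs]
          have hk' : (0:ℝ) ≤ (M:ℝ) - k := by
            have : (k:ℝ) ≤ (M:ℝ) := by exact_mod_cast hkM
            linarith
          have hM' : (M:ℝ) - k ≤ (M:ℝ) := by
            have : (0:ℝ) ≤ (k:ℝ) := Nat.cast_nonneg k
            linarith
          have h3 : ((M:ℝ) - k) * (ε * pos (-τ)) ≤ ((M:ℝ) - k) * (ε * S) :=
            mul_le_mul_of_nonneg_left (mul_le_mul_of_nonneg_left h2 hε.le) hk'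
          have h4 : ((M:ℝ) - k) * (ε * S) ≤ (M:ℝ) * (ε * S) :=
            mul_le_mul_of_nonneg_right hM' (mul_nonneg hε.le hS0)
          linarith [h1]
        have hεK : ε * K ≤ L - Rpab M v b k := by
          rw [← le_div_iff₀ hKpos]; exact hεe
        have : ε * ((∑ j ∈ Finset.Icc 1 k, t j) - (k:ℝ) * τ) ≤ ε * ((1 + (M:ℝ)) * S) :=
          mul_le_mul_of_nonneg_left hlin hε.le
        rw [hKdef] at hεK
        nlinarith [hpos, hε.le, hS0]
      exact ⟨fun _ => le_of_lt main, fun _ => main⟩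
    · -- k0 < k ≤ M : strict decrease
      have hRkL : Rpab M v b k = L := habove k hkk0 hkM
      refine ⟨1, one_pos, fun ε hε hεe => ?_⟩
      have main : Rpab M v (fun j => b j + ε * t j) k < L := by
        by_cases hkZ : k + 1 ≤ Z
        · -- H1 : the price index is still in the decreasing zone
          have hk1M : k + 1 ≤ M := by omega
          have hτeq : (if k + 1 ≤ M then t (k+1) else 0) = -(ρ ^ (E (k+1))) := by
            rw [if_pos hk1M]
            exact ht_eq (k+1) (by omega) hkZ
          set P := ρ ^ (E (k+1)) with hPdef
          have hPpos : (0:ℝ) < P := by positivity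
          have hb2 : b (k0+2) < b (k0+1) := by
            have : bext M b (k0+2) = b (k0+2) := if_pos (by omega)
            rw [this] at hgap; exact hgap
          have hBk1 : k0 + 2 ≤ B (k+1) := by
            by_contra hcon
            have hBl : B (k+1) = k0 + 1 := by
              have := hBge (k+1) (by omega); omega
            have hbb : b (k0+1) = b (k+1) := by rw [← hBl]; exact hBb (k+1)
            have : b (k+1) ≤ b (k0+2) := bid_mono hb (by omega) (by omega) (by omega)
            linarith
          set j' := B (k+1) - 1 with hj'def
          have hj'1 : k0 + 1 ≤ j' := by omega
          have hj'k : j' ≤ k := by have := hBle (k+1); omega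
          have htj' : t j' = -(ρ ^ (E j')) := ht_eq j' hj'1 (by omega)
          have hEj' : E (k+1) + 1 ≤ E j' := by
            have h1 := hBle j'
            have h2 := hBge j' hj'1
            rw [hE, hE]
            omega
          have hPj' : ρ * P ≤ ρ ^ (E j') := by
            calc ρ * P = ρ ^ (E (k+1) + 1) := by rw [hPdef]; ring
              _ ≤ ρ ^ (E j') := pow_le_pow_right₀ (by linarith) hEj'
          have hsum : ∑ j ∈ Finset.Icc 1 k, t j ≤ -(ρ * P) := by
            have hj'mem : j' ∈ Finset.Icc 1 k := Finset.mem_Icc.mpr ⟨by omega, hj'k⟩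
            rw [← Finset.add_sum_erase _ _ hj'mem]
            have : ∑ j ∈ (Finset.Icc 1 k).erase j', t j ≤ 0 :=
              Finset.sum_nonpos fun j _ => ht_nonpos j
            rw [htj']
            linarith
          rw [Rpab_perturb, hτeq, hRkL]
          have hposs := possum_le (M := M) (v := v) (c := bext M b (k+1)) (ε := ε)
            (τ := -P) (le_of_lt hε) k hkM
          have hposP : pos (-(-P)) = P := by rw [neg_neg]; exact pos_of_nonneg hPpos.le
          rw [hposP] at hposs
          have hlin : (∑ j ∈ Finset.Icc 1 k, t j) - (k:ℝ) * (-(P)) ≤ ((k:ℝ) - ρ) * P := by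
            have : (∑ j ∈ Finset.Icc 1 k, t j) ≤ -(ρ * P) := hsum
            nlinarith
          have hmul := mul_le_mul_of_nonneg_left hlin hε.le
          have hk' : (k:ℝ) ≤ (M:ℝ) := by exact_mod_cast hkM
          have hcomb : ε * (((k:ℝ) - ρ) * P) + ((M:ℝ) - k) * (ε * P) = -2 * (ε * P) := by
            rw [hρdef]; ring
          have hεP : 0 < ε * P := mul_pos hε hPpos
          linarith [hmul, hposs, hcomb, hεP]
        · -- H2 : the price is already zero and stays zero
          have hτ0 : (if k + 1 ≤ M then t (k+1) else 0) = 0 := by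
            split
            · exact ht_zero (k+1) (by omega)
            · rfl
          rw [Rpab_perturb, hτ0, hRkL]
          have hps : ∑ j ∈ Finset.Icc (k+1) M,
              (pos (v j - bext M b (k+1) - ε * 0) - pos (v j - bext M b (k+1))) = 0 :=
            Finset.sum_eq_zero fun j _ => by rw [mul_zero, sub_zero]; ring
          rw [hps]
          have hsum : ∑ j ∈ Finset.Icc 1 k, t j ≤ -1 := by
            have hmem : k0 + 1 ∈ Finset.Icc 1 k := Finset.mem_Icc.mpr ⟨by omega, by omega⟩
            rw [← Finset.add_sum_erase _ _ hmem]
            have h1 : ∑ j ∈ (Finset.Icc 1 k).erase (k0+1), t j ≤ 0 :=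
              Finset.sum_nonpos fun j _ => ht_nonpos j
            have h2 : t (k0+1) = -(ρ ^ (E (k0+1))) := ht_eq (k0+1) le_rfl hZ1
            have h3 : (1:ℝ) ≤ ρ ^ (E (k0+1)) := one_le_pow₀ (by linarith)
            rw [h2]
            linarith
          have hmul := mul_le_mul_of_nonneg_left hsum hε.le
          linarith [hmul]
      exact ⟨fun h => absurd h (by omega), fun _ => main⟩
  -- assemble
  obtain ⟨e₁, he₁, hctrl⟩ := exists_uniform (Finset.Icc 0 M) _ key
  set ε := min e₁ e₂ with hεdef
  have hεpos : 0 < ε := lt_min he₁ he₂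
  refine ⟨fun j => b j + ε * t j, hfeas ε hεpos (min_le_right _ _), ?_, ?_⟩
  · rw [hLdef]
    unfold Lpab
    apply Finset.sup'_le
    intro k hk
    rcases lt_or_ge k k0 with h | h
    · exact (hctrl ε hεpos (min_le_left _ _) k hk).1 h
    · exact le_of_lt ((hctrl ε hεpos (min_le_left _ _) k hk).2 h)
  · exact (hctrl ε hεpos (min_le_left _ _) M
      (Finset.mem_Icc.mpr ⟨Nat.zero_le _, le_rfl⟩)).2 (by omega)

end PABaux

/-- a minimax-loss bid in the multi-unit pay-as-bid auction has equal
conditional regret at all quantities `k ∈ {0,1,…,M}`. -/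
theorem minimax_pab_equal_conditional_regret
    (M : ℕ) (hM : 1 ≤ M) (v : ℕ → ℝ) (hv : IsVal M v)
    (b : ℕ → ℝ) (hb : IsMinimaxPAB M v b) :
    ∀ k ∈ Finset.Icc 0 M, ∀ k' ∈ Finset.Icc 0 M,
      Rpab M v b k = Rpab M v b k' := by
  classical
  obtain ⟨hbid, hmin⟩ := hb
  intro k hk k' hk'
  by_cases hall : ∀ l ∈ Finset.Icc 0 M, Rpab M v b l = Lpab M v b
  · rw [hall k hk, hall k' hk']
  · exfalso
    push_neg at hall
    obtain ⟨k1, hk1mem, hk1⟩ := hall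
    have hk1M : k1 ≤ M := (Finset.mem_Icc.mp hk1mem).2
    have hRM0 : 0 ≤ Rpab M v b M := PABaux.Rpab_nonneg hbid le_rfl
    have hL0 : 0 ≤ Lpab M v b := le_trans hRM0 (PABaux.R_le_L le_rfl)
    have hLpos : 0 < Lpab M v b := by
      rcases lt_or_eq_of_le hL0 with h | h
      · exact h
      · exfalso
        apply hk1
        have h1 : Rpab M v b k1 ≤ Lpab M v b := PABaux.R_le_L hk1M
        have h2 : 0 ≤ Rpab M v b k1 := PABaux.Rpab_nonneg hbid hk1M
        exact le_antisymm h1 (h ▸ h2)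
    have hSne : ((Finset.Icc 0 M).filter (fun l => Rpab M v b l ≠ Lpab M v b)).Nonempty :=
      ⟨k1, Finset.mem_filter.mpr ⟨hk1mem, hk1⟩⟩
    set k0 := (((Finset.Icc 0 M).filter (fun l => Rpab M v b l ≠ Lpab M v b)).max' hSne)
      with hk0def
    have hk0mem : k0 ∈ (Finset.Icc 0 M).filter (fun l => Rpab M v b l ≠ Lpab M v b) :=
      Finset.max'_mem _ hSne
    rw [Finset.mem_filter, Finset.mem_Icc] at hk0mem
    have habove : ∀ l, k0 < l → l ≤ M → Rpab M v b l = Lpab M v b := by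
      intro l h1 h2
      by_contra hc
      have hmem : l ∈ (Finset.Icc 0 M).filter (fun l => Rpab M v b l ≠ Lpab M v b) :=
        Finset.mem_filter.mpr ⟨Finset.mem_Icc.mpr ⟨Nat.zero_le _, h2⟩, hc⟩
      have := Finset.le_max' _ l hmem
      omega
    rcases lt_or_eq_of_le hk0mem.1.2 with hk0M | hk0M
    · obtain ⟨b2, hb2, hb2le, hb2M⟩ :=
        PABaux.lemmaII hM hv hbid hLpos hk0M hk0mem.2 habove
      rcases lt_or_eq_of_le hb2le with h | h
      · exact absurd (hmin b2 hb2) (not_le.mpr h)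
      · obtain ⟨b3, hb3, hlt3⟩ := PABaux.lemmaI hM hv hb2
          (by rw [h]; exact hLpos) (by rw [h]; exact ne_of_lt hb2M)
        rw [h] at hlt3
        exact absurd (hmin b3 hb3) (not_le.mpr hlt3)
    · have hne : Rpab M v b M ≠ Lpab M v b := by
        have h2 := hk0mem.2
        rw [hk0M] at h2
        exact h2
      obtain ⟨b', hb', hlt⟩ := PABaux.lemmaI hM hv hbid hLpos hne
      exact absurd (hmin b' hb') (not_le.mpr hlt)


end
end

section
/- The unique minimax-loss bid vector b^PAB in the multi-unit pay-as-bid auction is strictly below marginal values wherever values are positive: for every k ∈ {1,…,M}, if v_k > 0 then b^PAB_k < v_k. -/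
noncomputable section

/- ====================  auxiliary lemmas  ==================== -/

private lemma anti_aux (M : ℕ) (b : ℕ → ℝ)
    (h : ∀ k, 1 ≤ k → k < M → b (k + 1) ≤ b k) :
    ∀ i j, 1 ≤ i → i ≤ j → j ≤ M → b j ≤ b i := by
  intro i j hi
  induction j with
  | zero => intro h1 _; omega
  | succ n ih =>
    intro hij hjM
    rcases Nat.lt_or_ge i (n + 1) with hlt | hge
    · have h1 : b (n + 1) ≤ b n := h n (by omega) (by omega)
      exact h1.trans (ih (by omega) (by omega))
    · have : i = n + 1 := by omega
      simp [this]

private lemma pos_le_of (x δ : ℝ) (h1 : x ≤ δ) (h2 : 0 ≤ δ) : pos x ≤ δ :=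
  max_le h1 h2

private lemma pos_mono_aux {x y : ℝ} (h : x ≤ y) : pos x ≤ pos y :=
  max_le_max h le_rfl

private lemma pos_zero_of {x : ℝ} (h : x ≤ 0) : pos x = 0 :=
  max_eq_right h

private lemma Icc_one_eq_Ioc (k : ℕ) : Finset.Icc 1 k = Finset.Ioc 0 k := by
  ext x; simp [Finset.mem_Icc, Finset.mem_Ioc]; omega

private lemma Icc_succ_eq_Ioc (k M : ℕ) : Finset.Icc (k + 1) M = Finset.Ioc k M := by
  ext x; simp [Finset.mem_Icc, Finset.mem_Ioc]

private lemma Rpab_Ioc (M : ℕ) (v b : ℕ → ℝ) (k : ℕ) :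
    Rpab M v b k = (∑ j ∈ Finset.Ioc 0 k, (b j - bext M b (k + 1)))
      + ∑ j ∈ Finset.Ioc k M, pos (v j - bext M b (k + 1)) := by
  rw [Rpab, Icc_one_eq_Ioc, Icc_succ_eq_Ioc]

private lemma RM_eq (M : ℕ) (v b : ℕ → ℝ) :
    Rpab M v b M = ∑ j ∈ Finset.Ioc 0 M, b j := by
  rw [Rpab_Ioc]
  have h1 : bext M b (M + 1) = 0 := by
    rw [bext, if_neg (by omega)]
  rw [h1, Finset.Ioc_self, Finset.sum_empty, add_zero]
  simp

/- ====================  main theorem  ==================== -/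

/-- the (unique) minimax-loss bid in the multi-unit pay-as-bid auction is
strictly below marginal values wherever values are positive. -/
theorem minimax_pab_bids_below_values
    (M : ℕ) (hM : 1 ≤ M) (v : ℕ → ℝ) (hv : IsVal M v)
    (b : ℕ → ℝ) (hb : IsMinimaxPAB M v b) :
    ∀ k ∈ Finset.Icc 1 M, 0 < v k → b k < v k := by
  obtain ⟨⟨hbmono, hbM⟩, hopt⟩ := hb
  obtain ⟨hvmono, hvM⟩ := hv
  have banti := anti_aux M b hbmono
  have vanti := anti_aux M v hvmono
  have bnn : ∀ j, 1 ≤ j → j ≤ M → 0 ≤ b j := fun j h1 h2 =>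
    le_trans hbM (banti j M h1 h2 le_rfl)
  intro k0 hk0 hvk0
  rw [Finset.mem_Icc] at hk0
  obtain ⟨hk01, hk0M⟩ := hk0
  by_contra hcon
  push_neg at hcon
  -- t : end of the flat block of b starting at k0
  set S : Finset ℕ := (Finset.Icc k0 M).filter (fun j => b j = b k0) with hSdef
  have hk0S : k0 ∈ S := by
    rw [hSdef, Finset.mem_filter, Finset.mem_Icc]
    exact ⟨⟨le_rfl, hk0M⟩, rfl⟩
  have hSne : S.Nonempty := ⟨k0, hk0S⟩
  set t := S.max' hSne with htdef
  have htS : t ∈ S := S.max'_mem hSne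
  rw [hSdef, Finset.mem_filter, Finset.mem_Icc] at htS
  obtain ⟨⟨hk0t, htM⟩, htb⟩ := htS
  have ht1 : 1 ≤ t := hk01.trans hk0t
  set c := b t with hcdef
  have hcb : c = b k0 := htb
  have hc : 0 < c := by rw [hcb]; linarith
  have hvc : ∀ j, t ≤ j → j ≤ M → v j ≤ c := by
    intro j hj hjM
    have : v j ≤ v k0 := vanti k0 j hk01 (hk0t.trans hj) hjM
    rw [hcb]; linarith
  -- β = bext M b (t+1) < c
  set β := bext M b (t + 1) with hβdef
  have hβ0 : 0 ≤ β := by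
    rw [hβdef, bext]
    split_ifs with h
    · exact bnn (t + 1) (by omega) h
    · exact le_rfl
  have hβc : β < c := by
    rw [hβdef, bext]
    split_ifs with h
    · have hle : b (t + 1) ≤ b t := hbmono t ht1 (by omega)
      rcases lt_or_eq_of_le hle with hlt | heq
      · rw [hcdef]; exact hlt
      · exfalso
        have htS' : t + 1 ∈ S := by
          rw [hSdef, Finset.mem_filter, Finset.mem_Icc]
          refine ⟨⟨by omega, h⟩, ?_⟩
          rw [heq, ← hcdef]; exact hcb
        have := S.le_max' (t + 1) htS'
        omega
    · exact hc
  -- γ : minimum positive gap v i - b i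
  set G : Finset ℕ := (Finset.Icc 1 M).filter (fun i => b i < v i) with hGdef
  set γ : ℝ := if hG : G.Nonempty then G.inf' hG (fun i => v i - b i) else c with hγdef
  have hγ0 : 0 < γ := by
    rw [hγdef]
    split_ifs with h
    · rw [Finset.lt_inf'_iff]
      intro i hi
      rw [hGdef, Finset.mem_filter] at hi
      linarith [hi.2]
    · exact hc
  have hγle : ∀ i, 1 ≤ i → i ≤ M → b i < v i → γ ≤ v i - b i := by
    intro i h1 h2 h3
    have hiG : i ∈ G := by
      rw [hGdef, Finset.mem_filter, Finset.mem_Icc]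
      exact ⟨⟨h1, h2⟩, h3⟩
    rw [hγdef, dif_pos ⟨i, hiG⟩]
    exact Finset.inf'_le _ hiG
  -- ε and δ
  have htpos : (0 : ℝ) < (t : ℝ) := by exact_mod_cast ht1
  set ε : ℝ := min γ (min ((c - β) / (t : ℝ)) (c / (4 * ((M : ℝ) + 1) * ((t : ℝ) + 1)))) with hεdef
  have hε0 : 0 < ε := by
    apply lt_min hγ0
    apply lt_min
    · exact div_pos (by linarith) htpos
    · apply div_pos hc; positivity
  set δ : ℝ := (t : ℝ) * ε with hδdef
  have hδ0 : 0 < δ := mul_pos htpos hε0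
  have hδβ : δ ≤ c - β := by
    have h1 : ε ≤ (c - β) / (t : ℝ) := le_trans (min_le_right _ _) (min_le_left _ _)
    rw [hδdef]
    calc (t : ℝ) * ε ≤ (t : ℝ) * ((c - β) / (t : ℝ)) :=
          mul_le_mul_of_nonneg_left h1 htpos.le
      _ = c - β := by field_simp
  have hεγ : ε ≤ γ := min_le_left _ _
  have hkey : ((t : ℝ) - 1) * ε + 2 * (M : ℝ) * δ < c := by
    have h1 : ε ≤ c / (4 * ((M : ℝ) + 1) * ((t : ℝ) + 1)) :=
      le_trans (min_le_right _ _) (min_le_right _ _)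
    have hD : (0 : ℝ) < 4 * ((M : ℝ) + 1) * ((t : ℝ) + 1) := by positivity
    have h2 : ε * (4 * ((M : ℝ) + 1) * ((t : ℝ) + 1)) ≤ c := (le_div_iff₀ hD).mp h1
    have hM1 : (1 : ℝ) ≤ (M : ℝ) := by exact_mod_cast hM
    have htM' : (t : ℝ) ≤ (M : ℝ) := by exact_mod_cast htM
    rw [hδdef]
    nlinarith [mul_nonneg (show (0:ℝ) ≤ 2 * (M:ℝ) + (t:ℝ) + 3 by positivity) hε0.le, hc]
  -- the perturbed bid
  set b' : ℕ → ℝ := fun j => if j < t then b j + ε else if j = t then c - δ else b j with hb'def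
  have hb'lt : ∀ j, j < t → b' j = b j + ε := by
    intro j h; rw [hb'def]; simp only [if_pos h]
  have hb't : b' t = c - δ := by
    rw [hb'def]; simp
  have hb'gt : ∀ j, t < j → b' j = b j := by
    intro j h; rw [hb'def]
    simp only [if_neg (by omega : ¬ j < t), if_neg (by omega : ¬ j = t)]
  have hβle : β ≤ c - δ := by linarith
  have hb'bid : IsBid M b' := by
    constructor
    · intro j hj1 hjM
      rcases Nat.lt_trichotomy (j + 1) t with h | h | h
      · rw [hb'lt (j + 1) h, hb'lt j (by omega)]
        have := hbmono j hj1 hjM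
        linarith
      · rw [h, hb't, hb'lt j (by omega)]
        have : b t ≤ b j := banti j t hj1 (by omega) htM
        rw [hcdef]; linarith
      · rw [hb'gt (j + 1) h]
        rcases Nat.lt_or_ge t (j + 1) with _ | _
        · rcases Nat.eq_or_lt_of_le (show t ≤ j by omega) with he | hl
          · rw [← he, hb't]
            have hbt1 : β = b (t + 1) := by
              rw [hβdef, bext, if_pos (by omega)]
            linarith
          · rw [hb'gt j hl]
            exact hbmono j hj1 hjM
        · omega
    · rcases Nat.eq_or_lt_of_le htM with he | hl
      · rw [← he, hb't]
        have hβ0' : β = 0 := by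
          rw [hβdef, bext, if_neg (by omega)]
        linarith
      · rw [hb'gt M hl]
        exact hbM
  -- basic facts about the unperturbed loss
  have hRle : ∀ m, m ≤ M → Rpab M v b m ≤ Lpab M v b := by
    intro m hm
    exact Finset.le_sup' _ (Finset.mem_Icc.mpr ⟨Nat.zero_le m, hm⟩)
  have hLM : Rpab M v b M ≤ Lpab M v b := hRle M le_rfl
  have hRM := RM_eq M v b
  have hsplit : ∀ m, m ≤ M →
      (∑ j ∈ Finset.Ioc 0 m, b j) + ∑ j ∈ Finset.Ioc m M, b j
        = ∑ j ∈ Finset.Ioc 0 M, b j :=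
    fun m hm => Finset.sum_Ioc_consecutive _ (Nat.zero_le m) hm
  have htail : ∀ m, m < t → c ≤ ∑ j ∈ Finset.Ioc m M, b j := by
    intro m hm
    have htmem : t ∈ Finset.Ioc m M := Finset.mem_Ioc.mpr ⟨hm, htM⟩
    exact Finset.single_le_sum
      (fun j hj => bnn j (by have := (Finset.mem_Ioc.mp hj).1; omega)
        (Finset.mem_Ioc.mp hj).2) htmem
  -- main estimate : every regret of b' is < Lpab M v b
  have main : ∀ m ∈ Finset.Icc 0 M, Rpab M v b' m < Lpab M v b := by
    intro m hmIcc
    have hm : m ≤ M := (Finset.mem_Icc.mp hmIcc).2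
    rcases Nat.lt_trichotomy (m + 1) t with hcase | hcase | hcase
    · -- Case 1 : m + 1 < t
      have hm1M : m + 1 ≤ M := by omega
      have hbext' : bext M b' (m + 1) = b (m + 1) + ε := by
        rw [bext, if_pos hm1M, hb'lt _ hcase]
      have hbext : bext M b (m + 1) = b (m + 1) := by
        rw [bext, if_pos hm1M]
      rw [Rpab_Ioc, hbext']
      have hfirst : ∑ j ∈ Finset.Ioc 0 m, (b' j - (b (m + 1) + ε))
          = ∑ j ∈ Finset.Ioc 0 m, (b j - b (m + 1)) := by
        apply Finset.sum_congr rfl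
        intro j hj
        have hjm : j ≤ m := (Finset.mem_Ioc.mp hj).2
        rw [hb'lt j (by omega)]
        ring
      rw [hfirst]
      rcases le_or_gt (v (m + 1)) (b (m + 1)) with hva | hva
      · -- 1a : all positive parts vanish
        have hposz : ∑ j ∈ Finset.Ioc m M, pos (v j - (b (m + 1) + ε)) = 0 := by
          apply Finset.sum_eq_zero
          intro j hj
          obtain ⟨hj1, hj2⟩ := Finset.mem_Ioc.mp hj
          have : v j ≤ v (m + 1) := vanti (m + 1) j (by omega) hj1 hj2
          exact pos_zero_of (by linarith)
        rw [hposz, add_zero]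
        have h1 : ∑ j ∈ Finset.Ioc 0 m, (b j - b (m + 1))
            ≤ ∑ j ∈ Finset.Ioc 0 m, b j := by
          apply Finset.sum_le_sum
          intro j hj
          have := bnn (m + 1) (by omega) hm1M
          linarith
        have h2 := htail m (by omega)
        have h3 := hsplit m hm
        linarith [hRM ▸ hLM]
      · -- 1b : the (m+1)-st positive part strictly decreases
        have hγm := hγle (m + 1) (by omega) hm1M hva
        have hεm : ε ≤ v (m + 1) - b (m + 1) := hεγ.trans hγm
        have hm1mem : m + 1 ∈ Finset.Ioc m M := Finset.mem_Ioc.mpr ⟨by omega, hm1M⟩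
        have hsum : ∑ j ∈ Finset.Ioc m M, pos (v j - (b (m + 1) + ε))
            ≤ (∑ j ∈ Finset.Ioc m M, pos (v j - b (m + 1))) - ε := by
          rw [← Finset.add_sum_erase _ _ hm1mem,
              ← Finset.add_sum_erase _ (fun j => pos (v j - b (m + 1))) hm1mem]
          have e1 : pos (v (m + 1) - (b (m + 1) + ε))
              = pos (v (m + 1) - b (m + 1)) - ε := by
            rw [pos, pos, max_eq_left (by linarith), max_eq_left (by linarith)]
            ring
          have e2 : ∑ j ∈ (Finset.Ioc m M).erase (m + 1), pos (v j - (b (m + 1) + ε))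
              ≤ ∑ j ∈ (Finset.Ioc m M).erase (m + 1), pos (v j - b (m + 1)) :=
            Finset.sum_le_sum (fun j _ => pos_mono_aux (by linarith))
          linarith
        have hRm : Rpab M v b m = (∑ j ∈ Finset.Ioc 0 m, (b j - b (m + 1)))
            + ∑ j ∈ Finset.Ioc m M, pos (v j - b (m + 1)) := by
          rw [Rpab_Ioc, hbext]
        have := hRle m hm
        linarith
    · -- Case 2 : m + 1 = t
      have hbext' : bext M b' (m + 1) = c - δ := by
        rw [hcase, bext, if_pos htM, hb't]
      rw [Rpab_Ioc, hbext']
      have hmt : m < t := by omega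
      have hfirst : ∑ j ∈ Finset.Ioc 0 m, (b' j - (c - δ))
          = (∑ j ∈ Finset.Ioc 0 m, (b j - c)) + (m : ℝ) * (ε + δ) := by
        have : ∀ j ∈ Finset.Ioc 0 m, b' j - (c - δ) = (b j - c) + (ε + δ) := by
          intro j hj
          have hjm : j ≤ m := (Finset.mem_Ioc.mp hj).2
          rw [hb'lt j (by omega)]
          ring
        rw [Finset.sum_congr rfl this, Finset.sum_add_distrib, Finset.sum_const,
          Nat.card_Ioc, Nat.sub_zero, nsmul_eq_mul]
      have hfb : ∑ j ∈ Finset.Ioc 0 m, (b j - c) ≤ ∑ j ∈ Finset.Ioc 0 m, b j := by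
        apply Finset.sum_le_sum; intro j hj; linarith
      have hsec : ∑ j ∈ Finset.Ioc m M, pos (v j - (c - δ))
          ≤ ((M - m : ℕ) : ℝ) * δ := by
        have := Finset.sum_le_card_nsmul (Finset.Ioc m M)
          (fun j => pos (v j - (c - δ))) δ ?_
        · rwa [Nat.card_Ioc, nsmul_eq_mul] at this
        · intro j hj
          obtain ⟨hj1, hj2⟩ := Finset.mem_Ioc.mp hj
          have hvj : v j ≤ c := hvc j (by omega) hj2
          exact pos_le_of _ _ (by linarith) hδ0.le
      have hMm : ((M - m : ℕ) : ℝ) ≤ (M : ℝ) := by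
        exact_mod_cast Nat.sub_le M m
      have hmM : (m : ℝ) ≤ (M : ℝ) := by exact_mod_cast hm
      have hmc : (m : ℝ) = (t : ℝ) - 1 := by
        have : ((m : ℝ) + 1) = (t : ℝ) := by exact_mod_cast hcase
        linarith
      have h2 := htail m hmt
      have h3 := hsplit m hm
      have hp1 : ((M - m : ℕ) : ℝ) * δ ≤ (M : ℝ) * δ :=
        mul_le_mul_of_nonneg_right hMm hδ0.le
      have hp2 : (m : ℝ) * δ ≤ (M : ℝ) * δ :=
        mul_le_mul_of_nonneg_right hmM hδ0.le
      have hfin : (∑ j ∈ Finset.Ioc 0 m, (b j - c)) + (m : ℝ) * (ε + δ)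
          + ((M - m : ℕ) : ℝ) * δ < ∑ j ∈ Finset.Ioc 0 M, b j := by
        have : (m : ℝ) * (ε + δ) = ((t : ℝ) - 1) * ε + (m : ℝ) * δ := by
          rw [hmc]; ring
        rw [this]
        linarith [hkey]
      calc (∑ j ∈ Finset.Ioc 0 m, (b' j - (c - δ)))
            + ∑ j ∈ Finset.Ioc m M, pos (v j - (c - δ))
          ≤ (∑ j ∈ Finset.Ioc 0 m, (b j - c)) + (m : ℝ) * (ε + δ)
            + ((M - m : ℕ) : ℝ) * δ := by rw [hfirst]; linarith
        _ < ∑ j ∈ Finset.Ioc 0 M, b j := hfin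
        _ ≤ Lpab M v b := hRM ▸ hLM
    · -- Case 3 : t ≤ m
      have htm : t ≤ m := by omega
      have hbext : bext M b' (m + 1) = bext M b (m + 1) := by
        rw [bext, bext]
        split_ifs with h
        · exact hb'gt (m + 1) (by omega)
        · rfl
      obtain ⟨s, hs⟩ : ∃ s, t = s + 1 := ⟨t - 1, by omega⟩
      have hd : ∑ j ∈ Finset.Ioc 0 m, (b' j - b j) = ((t - 1 : ℕ) : ℝ) * ε - δ := by
        rw [← Finset.sum_Ioc_consecutive _ (Nat.zero_le t) htm]
        have hz : ∑ j ∈ Finset.Ioc t m, (b' j - b j) = 0 :=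
          Finset.sum_eq_zero (fun j hj => by
            rw [hb'gt j (Finset.mem_Ioc.mp hj).1]; ring)
        rw [hz, add_zero]
        have hsplit2 : ∑ j ∈ Finset.Ioc 0 t, (b' j - b j)
            = (∑ j ∈ Finset.Ioc 0 s, (b' j - b j)) + (b' t - b t) := by
          rw [hs]
          exact Finset.sum_Ioc_succ_top (Nat.zero_le s) _
        rw [hsplit2]
        have h1 : ∑ j ∈ Finset.Ioc 0 s, (b' j - b j) = ((s : ℕ) : ℝ) * ε := by
          rw [Finset.sum_congr rfl (fun j hj => by
            obtain ⟨_, hj2⟩ := Finset.mem_Ioc.mp hj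
            rw [hb'lt j (by omega)]; ring : ∀ j ∈ Finset.Ioc 0 s,
              b' j - b j = ε)]
          rw [Finset.sum_const, Nat.card_Ioc, Nat.sub_zero, nsmul_eq_mul]
        have h2 : b' t - b t = -δ := by
          rw [hb't, ← hcdef]; ring
        have h3 : ((t - 1 : ℕ) : ℝ) = ((s : ℕ) : ℝ) := by
          congr 1; omega
        rw [h1, h2, h3]
        ring
      have hEq : Rpab M v b' m = Rpab M v b m + (((t - 1 : ℕ) : ℝ) * ε - δ) := by
        rw [Rpab_Ioc, Rpab_Ioc, hbext]
        have hposEq : ∑ j ∈ Finset.Ioc m M, pos (v j - bext M b (m + 1))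
            = ∑ j ∈ Finset.Ioc m M, pos (v j - bext M b (m + 1)) := rfl
        have hfs : ∑ j ∈ Finset.Ioc 0 m, (b' j - bext M b (m + 1))
            = (∑ j ∈ Finset.Ioc 0 m, (b j - bext M b (m + 1)))
              + (((t - 1 : ℕ) : ℝ) * ε - δ) := by
          rw [← hd, ← Finset.sum_add_distrib]
          apply Finset.sum_congr rfl
          intro j hj
          ring
        rw [hfs]
        ring
      have hcast : ((t - 1 : ℕ) : ℝ) = (t : ℝ) - 1 := by
        have h := Nat.cast_sub (R := ℝ) ht1
        simpa using h
      have hneg : ((t - 1 : ℕ) : ℝ) * ε - δ = -ε := by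
        rw [hcast, hδdef]; ring
      rw [hEq, hneg]
      have := hRle m hm
      linarith
  have hfin : Lpab M v b' < Lpab M v b := by
    rw [Lpab]
    exact (Finset.sup'_lt_iff _).mpr main
  exact absurd (hopt b' hb'bid) (not_le.mpr hfin)

end
end

section
/- The unique minimax-loss bid vector b^PAB in the multi-unit pay-as-bid auction is strictly decreasing in quantity wherever values are positive: for every k ∈ {1,…,M}, if v_k > 0 then b^PAB_k > b^PAB_{k+1} (with the convention b^PAB_{M+1} = 0). -/
noncomputable section

namespace PabProof

open Finset

lemma pab_pos_nonneg (x : ℝ) : 0 ≤ pos x := le_max_right _ _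

lemma pab_pos_mono {x y : ℝ} (h : x ≤ y) : pos x ≤ pos y := max_le_max h le_rfl

lemma pab_pos_of_nonneg {x : ℝ} (h : 0 ≤ x) : pos x = x := max_eq_left h

lemma pab_pos_of_nonpos {x : ℝ} (h : x ≤ 0) : pos x = 0 := max_eq_right h

lemma pab_pos_add_le {x η : ℝ} (hη : 0 ≤ η) : pos (x + η) ≤ pos x + η := by
  unfold pos
  apply max_le
  · have := le_max_left x (0:ℝ); linarith
  · have := le_max_right x (0:ℝ); linarith

lemma pab_pos_sub_lt {x ε : ℝ} (hx : 0 < x) (hε : 0 < ε) : pos (x - ε) < pos x := by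
  unfold pos
  rw [max_eq_left hx.le]
  exact max_lt (by linarith) hx

lemma anti_mono {M : ℕ} {f : ℕ → ℝ} (hf : ∀ k, 1 ≤ k → k < M → f (k + 1) ≤ f k)
    {i j : ℕ} (h1 : 1 ≤ i) (hij : i ≤ j) (hj : j ≤ M) : f j ≤ f i := by
  induction j, hij using Nat.le_induction with
  | base => exact le_rfl
  | succ n hn ih =>
      have hnM : n < M := Nat.lt_of_succ_le hj
      exact le_trans (hf n (h1.trans hn) hnM) (ih hnM.le)

lemma bid_mono {M : ℕ} {b : ℕ → ℝ} (hb : IsBid M b) {i j : ℕ} (h1 : 1 ≤ i) (hij : i ≤ j)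
    (hj : j ≤ M) : b j ≤ b i := anti_mono hb.1 h1 hij hj

lemma bid_nonneg {M : ℕ} {b : ℕ → ℝ} (hb : IsBid M b) {j : ℕ} (h1 : 1 ≤ j) (hj : j ≤ M) :
    0 ≤ b j := le_trans hb.2 (bid_mono hb h1 hj le_rfl)

lemma bext_le {M : ℕ} {b : ℕ → ℝ} {j : ℕ} (h : j ≤ M) : bext M b j = b j := if_pos h

lemma bext_gt' {M : ℕ} {b : ℕ → ℝ} {j : ℕ} (h : M < j) : bext M b j = 0 := if_neg (not_le.mpr h)

lemma bext_nonneg {M : ℕ} {b : ℕ → ℝ} (hb : IsBid M b) {j : ℕ} (h1 : 1 ≤ j) :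
    0 ≤ bext M b j := by
  by_cases h : j ≤ M
  · rw [bext_le h]; exact bid_nonneg hb h1 h
  · rw [bext_gt' (not_le.mp h)]

lemma Icc_one (m : ℕ) : Finset.Icc 1 m = Finset.Ioc 0 m := by
  ext j; simp [Finset.mem_Icc, Finset.mem_Ioc]; omega

lemma Icc_succ' (m M : ℕ) : Finset.Icc (m + 1) M = Finset.Ioc m M := by
  ext j; simp [Finset.mem_Icc, Finset.mem_Ioc]

lemma Rpab_eq (M : ℕ) (v b : ℕ → ℝ) (m : ℕ) :
    Rpab M v b m = (∑ j ∈ Finset.Ioc 0 m, (b j - bext M b (m + 1)))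
      + ∑ j ∈ Finset.Ioc m M, pos (v j - bext M b (m + 1)) := by
  rw [Rpab, Icc_one, Icc_succ']

lemma RM_eq (M : ℕ) (v b : ℕ → ℝ) : Rpab M v b M = ∑ j ∈ Finset.Ioc 0 M, b j := by
  rw [Rpab_eq, bext_gt' (Nat.lt_succ_self M)]
  simp


/-- The perturbed bid: raise bids `1..W` by `ε`, lower bids `W+1..E` by `η`. -/
def pert (b : ℕ → ℝ) (W E : ℕ) (ε η : ℝ) : ℕ → ℝ := fun j =>
  if j ≤ W then b j + ε else if j ≤ E then b j - η else b j

lemma pert_le {b : ℕ → ℝ} {W E : ℕ} {ε η : ℝ} (hε : 0 ≤ ε) (hη : 0 ≤ η) (j : ℕ) :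
    pert b W E ε η j ≤ b j + ε := by
  simp only [pert]; split_ifs <;> linarith

lemma isBid_pert_one {M : ℕ} {b : ℕ → ℝ} {ε : ℝ} (hb : IsBid M b) (hε : 0 ≤ ε) :
    IsBid M (pert b M M ε 0) := by
  constructor
  · intro j h1 hj
    have h2 : j + 1 ≤ M := hj
    have h3 : j ≤ M := by omega
    simp only [pert, if_pos h2, if_pos h3]
    have := hb.1 j h1 hj
    linarith
  · simp only [pert, if_pos (le_refl M)]
    have := hb.2; linarith

lemma isBid_pert {M W E : ℕ} {b : ℕ → ℝ} {ε η : ℝ} (hb : IsBid M b) (hWE : W < E)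
    (hEM : E ≤ M) (hε : 0 ≤ ε) (hη : 0 ≤ η) (hq : bext M b (E + 1) + η ≤ b E) :
    IsBid M (pert b W E ε η) := by
  constructor
  · intro j h1 hj
    have hmono := hb.1 j h1 hj
    by_cases h1' : j + 1 ≤ W
    · have : j ≤ W := by omega
      simp only [pert, if_pos h1', if_pos this]; linarith
    · by_cases h2' : j + 1 ≤ E
      · simp only [pert, if_neg h1', if_pos h2']
        by_cases h3' : j ≤ W
        · simp only [if_pos h3']; linarith
        · have : j ≤ E := by omega
          simp only [if_neg h3', if_pos this]; linarith
      · simp only [pert, if_neg h1', if_neg h2']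
        by_cases h3' : j ≤ E
        · have hjE : j = E := by omega
          have h4 : ¬ j ≤ W := by omega
          simp only [if_neg h4, if_pos h3']
          have hE1 : E + 1 ≤ M := by omega
          rw [bext_le hE1] at hq
          rw [hjE]
          linarith
        · have h4 : ¬ j ≤ W := by omega
          simp only [if_neg h4, if_neg h3']; linarith
  · have h4 : ¬ M ≤ W := by omega
    by_cases h5 : M ≤ E
    · have hEM' : E = M := le_antisymm hEM h5
      simp only [pert, if_neg h4, if_pos h5]
      subst hEM'
      rw [bext_gt' (Nat.lt_succ_self E)] at hq
      linarith
    · simp only [pert, if_neg h4, if_neg h5]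
      exact hb.2

/-- Zone 1 (m+1 ≤ W): regret does not increase. -/
lemma Z1a {M W E m : ℕ} {v b : ℕ → ℝ} {ε η : ℝ} (hWM : W ≤ M) (hm : m + 1 ≤ W)
    (hε : 0 ≤ ε) :
    Rpab M v (pert b W E ε η) m ≤ Rpab M v b m := by
  have hmM : m + 1 ≤ M := hm.trans hWM
  have hpe : bext M (pert b W E ε η) (m + 1) = b (m + 1) + ε := by
    rw [bext_le hmM]; simp only [pert, if_pos hm]
  rw [Rpab_eq, Rpab_eq, hpe, bext_le hmM]
  have h1 : ∑ j ∈ Finset.Ioc 0 m, (pert b W E ε η j - (b (m + 1) + ε))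
      = ∑ j ∈ Finset.Ioc 0 m, (b j - b (m + 1)) := by
    apply Finset.sum_congr rfl
    intro j hj
    have hjW : j ≤ W := by have := (Finset.mem_Ioc.mp hj).2; omega
    simp only [pert, if_pos hjW]; ring
  have h2 : ∑ j ∈ Finset.Ioc m M, pos (v j - (b (m + 1) + ε))
      ≤ ∑ j ∈ Finset.Ioc m M, pos (v j - b (m + 1)) := by
    apply Finset.sum_le_sum
    intro j hj
    exact pab_pos_mono (by linarith)
  linarith

/-- Zone 1, strict version. -/
lemma Z1b {M W E m : ℕ} {v b : ℕ → ℝ} {ε η : ℝ} (hWM : W ≤ M) (hm : m + 1 ≤ W)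
    (hε : 0 < ε) {j₀ : ℕ} (hj₀1 : m + 1 ≤ j₀) (hj₀2 : j₀ ≤ M) (hj₀3 : b (m + 1) < v j₀) :
    Rpab M v (pert b W E ε η) m < Rpab M v b m := by
  have hmM : m + 1 ≤ M := hm.trans hWM
  have hpe : bext M (pert b W E ε η) (m + 1) = b (m + 1) + ε := by
    rw [bext_le hmM]; simp only [pert, if_pos hm]
  rw [Rpab_eq, Rpab_eq, hpe, bext_le hmM]
  have h1 : ∑ j ∈ Finset.Ioc 0 m, (pert b W E ε η j - (b (m + 1) + ε))
      = ∑ j ∈ Finset.Ioc 0 m, (b j - b (m + 1)) := by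
    apply Finset.sum_congr rfl
    intro j hj
    have hjW : j ≤ W := by have := (Finset.mem_Ioc.mp hj).2; omega
    simp only [pert, if_pos hjW]; ring
  have h2 : ∑ j ∈ Finset.Ioc m M, pos (v j - (b (m + 1) + ε))
      < ∑ j ∈ Finset.Ioc m M, pos (v j - b (m + 1)) := by
    apply Finset.sum_lt_sum
    · intro j hj; exact pab_pos_mono (by linarith)
    · refine ⟨j₀, Finset.mem_Ioc.mpr ⟨by omega, hj₀2⟩, ?_⟩
      have harg : v j₀ - (b (m + 1) + ε) = (v j₀ - b (m + 1)) - ε := by ring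
      rw [harg]
      exact pab_pos_sub_lt (by linarith) hε
  linarith

/-- Zone 2 (W < m+1 ≤ E): regret increases by at most `M(ε+η) + Mη`. -/
lemma Z2 {M W E m : ℕ} {v b : ℕ → ℝ} {ε η : ℝ} (hEM : E ≤ M) (hm1 : W < m + 1)
    (hm2 : m + 1 ≤ E) (hε : 0 ≤ ε) (hη : 0 ≤ η) :
    Rpab M v (pert b W E ε η) m ≤ Rpab M v b m + (M : ℝ) * (ε + η) + (M : ℝ) * η := by
  have hmM : m + 1 ≤ M := hm2.trans hEM
  have hpe : bext M (pert b W E ε η) (m + 1) = b (m + 1) - η := by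
    rw [bext_le hmM]; simp only [pert, if_neg (by omega : ¬ m + 1 ≤ W), if_pos hm2]
  rw [Rpab_eq, Rpab_eq, hpe, bext_le hmM]
  have h1 : ∑ j ∈ Finset.Ioc 0 m, (pert b W E ε η j - (b (m + 1) - η))
      ≤ ∑ j ∈ Finset.Ioc 0 m, (b j - b (m + 1)) + (M : ℝ) * (ε + η) := by
    have h1a : ∑ j ∈ Finset.Ioc 0 m, (pert b W E ε η j - (b (m + 1) - η))
        ≤ ∑ j ∈ Finset.Ioc 0 m, ((b j - b (m + 1)) + (ε + η)) := by
      apply Finset.sum_le_sum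
      intro j hj
      have := pert_le (b := b) (W := W) (E := E) hε hη j
      linarith
    have h1b : ∑ j ∈ Finset.Ioc 0 m, ((b j - b (m + 1)) + (ε + η))
        = (∑ j ∈ Finset.Ioc 0 m, (b j - b (m + 1))) + (m : ℝ) * (ε + η) := by
      rw [Finset.sum_add_distrib, Finset.sum_const, Nat.card_Ioc, Nat.sub_zero,
        nsmul_eq_mul]
    have h1c : (m : ℝ) * (ε + η) ≤ (M : ℝ) * (ε + η) := by
      apply mul_le_mul_of_nonneg_right _ (by linarith)
      exact_mod_cast (by omega : m ≤ M)
    linarith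
  have h2 : ∑ j ∈ Finset.Ioc m M, pos (v j - (b (m + 1) - η))
      ≤ ∑ j ∈ Finset.Ioc m M, pos (v j - b (m + 1)) + (M : ℝ) * η := by
    have h2a : ∑ j ∈ Finset.Ioc m M, pos (v j - (b (m + 1) - η))
        ≤ ∑ j ∈ Finset.Ioc m M, (pos (v j - b (m + 1)) + η) := by
      apply Finset.sum_le_sum
      intro j hj
      have harg : v j - (b (m + 1) - η) = (v j - b (m + 1)) + η := by ring
      rw [harg]
      exact pab_pos_add_le hη
    have h2b : ∑ j ∈ Finset.Ioc m M, (pos (v j - b (m + 1)) + η)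
        = (∑ j ∈ Finset.Ioc m M, pos (v j - b (m + 1))) + ((M - m : ℕ) : ℝ) * η := by
      rw [Finset.sum_add_distrib, Finset.sum_const, Nat.card_Ioc, nsmul_eq_mul]
    have h2c : ((M - m : ℕ) : ℝ) * η ≤ (M : ℝ) * η := by
      apply mul_le_mul_of_nonneg_right _ hη
      exact_mod_cast (by omega : M - m ≤ M)
    linarith
  linarith

/-- Zone 3 (E ≤ m ≤ M): exact change `Wε − (E−W)η`. -/
lemma Z3 {M W E m : ℕ} {v b : ℕ → ℝ} {ε η : ℝ} (hWE : W ≤ E) (hm : E ≤ m) (hmM : m ≤ M) :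
    Rpab M v (pert b W E ε η) m
      = Rpab M v b m + ((W : ℝ) * ε - ((E : ℝ) - (W : ℝ)) * η) := by
  have hpe : bext M (pert b W E ε η) (m + 1) = bext M b (m + 1) := by
    by_cases h : m + 1 ≤ M
    · rw [bext_le h, bext_le h]
      simp only [pert, if_neg (by omega : ¬ m + 1 ≤ W), if_neg (by omega : ¬ m + 1 ≤ E)]
    · rw [bext_gt' (by omega), bext_gt' (by omega)]
  rw [Rpab_eq, Rpab_eq, hpe]
  have h1 : ∑ j ∈ Finset.Ioc 0 m, (pert b W E ε η j - bext M b (m + 1))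
      = (∑ j ∈ Finset.Ioc 0 m, (b j - bext M b (m + 1)))
        + ((W : ℝ) * ε - ((E : ℝ) - (W : ℝ)) * η) := by
    have e0 : ∑ j ∈ Finset.Ioc 0 m, (pert b W E ε η j - bext M b (m + 1))
        = ∑ j ∈ Finset.Ioc 0 m, ((b j - bext M b (m + 1)) + (pert b W E ε η j - b j)) := by
      apply Finset.sum_congr rfl; intro j hj; ring
    rw [e0, Finset.sum_add_distrib]
    have c1 : ∑ j ∈ Finset.Ioc 0 W, (pert b W E ε η j - b j) = (W : ℝ) * ε := by
      have : ∀ j ∈ Finset.Ioc 0 W, pert b W E ε η j - b j = ε := by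
        intro j hj
        have hjW : j ≤ W := (Finset.mem_Ioc.mp hj).2
        simp only [pert, if_pos hjW]; ring
      rw [Finset.sum_congr rfl this, Finset.sum_const, Nat.card_Ioc, Nat.sub_zero,
        nsmul_eq_mul]
    have c2 : ∑ j ∈ Finset.Ioc W E, (pert b W E ε η j - b j) = ((E : ℝ) - (W : ℝ)) * (-η) := by
      have : ∀ j ∈ Finset.Ioc W E, pert b W E ε η j - b j = -η := by
        intro j hj
        obtain ⟨hj1, hj2⟩ := Finset.mem_Ioc.mp hj
        simp only [pert, if_neg (by omega : ¬ j ≤ W), if_pos hj2]; ring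
      rw [Finset.sum_congr rfl this, Finset.sum_const, Nat.card_Ioc, nsmul_eq_mul,
        Nat.cast_sub hWE]
    have c3 : ∑ j ∈ Finset.Ioc E m, (pert b W E ε η j - b j) = 0 := by
      apply Finset.sum_eq_zero
      intro j hj
      obtain ⟨hj1, hj2⟩ := Finset.mem_Ioc.mp hj
      simp only [pert, if_neg (by omega : ¬ j ≤ W), if_neg (by omega : ¬ j ≤ E)]; ring
    have s1 := Finset.sum_Ioc_consecutive (fun j => pert b W E ε η j - b j)
      (Nat.zero_le W) hWE
    have s2 := Finset.sum_Ioc_consecutive (fun j => pert b W E ε η j - b j)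
      (Nat.zero_le E) hm
    rw [← s2, ← s1, c1, c2, c3]
    ring
  linarith


lemma R_le_L {M : ℕ} {v b : ℕ → ℝ} {m : ℕ} (hm : m ≤ M) :
    Rpab M v b m ≤ Lpab M v b :=
  Finset.le_sup' (Rpab M v b) (Finset.mem_Icc.mpr ⟨Nat.zero_le _, hm⟩)

lemma L_lt {M : ℕ} {v b' : ℕ → ℝ} {X : ℝ} (h : ∀ m, m ≤ M → Rpab M v b' m < X) :
    Lpab M v b' < X :=
  (Finset.sup'_lt_iff _).mpr (fun m hm => h m (Finset.mem_Icc.mp hm).2)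

/-- If all values beyond `m` are at most the price `b (m+1)`, then
`R_m + b k ≤ R_M` for any `k ∈ (m, M]`. -/
lemma slack_flat {M : ℕ} {v b : ℕ → ℝ} {m k : ℕ} (hb : IsBid M b) (hmk : m < k) (hkM : k ≤ M)
    (hall : ∀ j, m + 1 ≤ j → j ≤ M → v j ≤ b (m + 1)) :
    Rpab M v b m + b k ≤ Rpab M v b M := by
  have hm1M : m + 1 ≤ M := by omega
  rw [Rpab_eq, bext_le hm1M, RM_eq]
  have h0 : ∑ j ∈ Finset.Ioc m M, pos (v j - b (m + 1)) = 0 := by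
    apply Finset.sum_eq_zero
    intro j hj
    obtain ⟨hj1, hj2⟩ := Finset.mem_Ioc.mp hj
    exact pab_pos_of_nonpos (by linarith [hall j hj1 hj2])
  have h1 : ∑ j ∈ Finset.Ioc 0 m, (b j - b (m + 1)) ≤ ∑ j ∈ Finset.Ioc 0 m, b j := by
    apply Finset.sum_le_sum
    intro j hj
    have := bid_nonneg hb (by omega : 1 ≤ m + 1) hm1M
    linarith
  have h2 := Finset.sum_Ioc_consecutive b (Nat.zero_le m) (by omega : m ≤ M)
  have h3 : b k ≤ ∑ j ∈ Finset.Ioc m M, b j := by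
    apply Finset.single_le_sum (f := b) _ (Finset.mem_Ioc.mpr ⟨hmk, hkM⟩)
    intro j hj
    obtain ⟨hj1, hj2⟩ := Finset.mem_Ioc.mp hj
    exact bid_nonneg hb (by omega) hj2
  linarith

/-- Case-1 slack: if all bids from `m₀+1` on are zero, `R_M + (v (m₀+1))₊ ≤ R_{m₀}`. -/
lemma S1 {M : ℕ} {v b : ℕ → ℝ} {m₀ : ℕ} (hM : m₀ + 1 ≤ M)
    (hzero : ∀ j, m₀ + 1 ≤ j → j ≤ M → b j = 0) :
    Rpab M v b M + pos (v (m₀ + 1)) ≤ Rpab M v b m₀ := by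
  rw [RM_eq, Rpab_eq, bext_le hM, hzero (m₀ + 1) le_rfl hM]
  simp only [sub_zero]
  have h2 := Finset.sum_Ioc_consecutive b (Nat.zero_le m₀) (by omega : m₀ ≤ M)
  have h3 : ∑ j ∈ Finset.Ioc m₀ M, b j = 0 := by
    apply Finset.sum_eq_zero
    intro j hj
    obtain ⟨hj1, hj2⟩ := Finset.mem_Ioc.mp hj
    exact hzero j (by omega) hj2
  have h4 : pos (v (m₀ + 1)) ≤ ∑ j ∈ Finset.Ioc m₀ M, pos (v j) := by
    apply Finset.single_le_sum (f := fun j => pos (v j))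
      (fun j _ => pab_pos_nonneg _) (Finset.mem_Ioc.mpr ⟨by omega, hM⟩)
  linarith

/-- Case-2 slack: inside a flat block starting at `k = m₀+1`,
`R_m + (v k − b k)₊ ≤ R_{m₀}`. -/
lemma S2 {M : ℕ} {v b : ℕ → ℝ} {m₀ E m : ℕ}
    (hkm : m₀ + 1 ≤ m) (hmE : m + 1 ≤ E) (hEM : E ≤ M)
    (hbc : ∀ j, m₀ + 1 ≤ j → j ≤ E → b j = b (m₀ + 1)) :
    Rpab M v b m + pos (v (m₀ + 1) - b (m₀ + 1)) ≤ Rpab M v b m₀ := by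
  have hm1M : m + 1 ≤ M := by omega
  have hm₀M : m₀ + 1 ≤ M := by omega
  have hbp : b (m + 1) = b (m₀ + 1) := hbc (m + 1) (by omega) hmE
  rw [Rpab_eq M v b m, Rpab_eq M v b m₀, bext_le hm1M, bext_le hm₀M, hbp]
  have e1 := Finset.sum_Ioc_consecutive (fun j => b j - b (m₀ + 1))
    (Nat.zero_le m₀) (by omega : m₀ ≤ m)
  have e2 := Finset.sum_Ioc_consecutive (fun j => pos (v j - b (m₀ + 1)))
    (by omega : m₀ ≤ m) (by omega : m ≤ M)
  have e3 : ∑ j ∈ Finset.Ioc m₀ m, (b j - b (m₀ + 1)) = 0 := by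
    apply Finset.sum_eq_zero
    intro j hj
    obtain ⟨hj1, hj2⟩ := Finset.mem_Ioc.mp hj
    rw [hbc j (by omega) (by omega)]; ring
  have e4 : pos (v (m₀ + 1) - b (m₀ + 1)) ≤ ∑ j ∈ Finset.Ioc m₀ m, pos (v j - b (m₀ + 1)) := by
    apply Finset.single_le_sum (f := fun j => pos (v j - b (m₀ + 1)))
      (fun j _ => pab_pos_nonneg _) (Finset.mem_Ioc.mpr ⟨by omega, by omega⟩)
  linarith

/-- Case-3 slack: inside a flat block at level `c = b (m₀+1) ≥ v (m₀+1)`,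
`R_m + b (m₀+1) ≤ R_M`. -/
lemma S3 {M : ℕ} {v b : ℕ → ℝ} {m₀ E m : ℕ} (hb : IsBid M b) (hv : IsVal M v)
    (hkm : m₀ ≤ m) (hmE : m + 1 ≤ E) (hEM : E ≤ M)
    (hbc : ∀ j, m₀ + 1 ≤ j → j ≤ E → b j = b (m₀ + 1))
    (hvc : v (m₀ + 1) ≤ b (m₀ + 1)) :
    Rpab M v b m + b (m₀ + 1) ≤ Rpab M v b M := by
  have hm1M : m + 1 ≤ M := by omega
  have hbp : b (m + 1) = b (m₀ + 1) := hbc (m + 1) (by omega) hmE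
  rw [Rpab_eq M v b m, bext_le hm1M, hbp, RM_eq]
  have h0 : ∑ j ∈ Finset.Ioc m M, pos (v j - b (m₀ + 1)) = 0 := by
    apply Finset.sum_eq_zero
    intro j hj
    obtain ⟨hj1, hj2⟩ := Finset.mem_Ioc.mp hj
    have : v j ≤ v (m₀ + 1) := anti_mono hv.1 (by omega) (by omega) hj2
    exact pab_pos_of_nonpos (by linarith)
  have hc0 : 0 ≤ b (m₀ + 1) := bid_nonneg hb (by omega) (by omega)
  have h1 : ∑ j ∈ Finset.Ioc 0 m, (b j - b (m₀ + 1)) ≤ ∑ j ∈ Finset.Ioc 0 m, b j := by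
    apply Finset.sum_le_sum; intro j hj; linarith
  have h2 := Finset.sum_Ioc_consecutive b (Nat.zero_le m) (by omega : m ≤ M)
  have h3 : b (m₀ + 1) ≤ ∑ j ∈ Finset.Ioc m M, b j := by
    have hmem : m + 1 ∈ Finset.Ioc m M := Finset.mem_Ioc.mpr ⟨by omega, hm1M⟩
    have hnn : ∀ j ∈ Finset.Ioc m M, 0 ≤ b j := by
      intro j hj
      obtain ⟨hj1, hj2⟩ := Finset.mem_Ioc.mp hj
      exact bid_nonneg hb (by omega) hj2
    have := Finset.single_le_sum hnn hmem
    rw [hbp] at this; exact this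
  linarith

lemma num1 {Mr δ η ε : ℝ} (hM : 0 ≤ Mr) (hδ : 0 < δ) (hη : 0 < η) (hε : 0 ≤ ε) (hεη : ε ≤ η)
    (h1 : η * (4 * (Mr + 1)) ≤ δ) : Mr * (ε + η) + Mr * η < δ := by
  nlinarith [mul_le_mul_of_nonneg_left hεη hM, mul_nonneg hM hη.le]

lemma num2 {Mr Wr Er η ε : ℝ} (hW : Wr ≤ Mr) (hWnn : 0 ≤ Wr) (hE : Wr + 1 ≤ Er)
    (hη : 0 < η) (hε : 0 < ε) (hεM : ε * (Mr + 1) = η) :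
    Wr * ε - (Er - Wr) * η < 0 := by
  have h1 : Wr * ε ≤ Mr * ε := mul_le_mul_of_nonneg_right hW hε.le
  have h2 : Mr * ε + ε = η := by rw [← hεM]; ring
  have h3 : η ≤ (Er - Wr) * η := by
    nlinarith [mul_nonneg (show (0:ℝ) ≤ Er - Wr - 1 by linarith) hη.le]
  linarith


end PabProof

section
open PabProof

/-- the (unique) minimax-loss bid in the multi-unit pay-as-bid auction is
strictly decreasing in quantity wherever values are positive (with `b_{M+1} = 0`). -/
theorem minimax_pab_bids_strictly_decreasing
    (M : ℕ) (hM : 1 ≤ M) (v : ℕ → ℝ) (hv : IsVal M v)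
    (b : ℕ → ℝ) (hb : IsMinimaxPAB M v b) :
    ∀ k ∈ Finset.Icc 1 M, 0 < v k → bext M b (k + 1) < b k := by
  classical
  intro k hk hvk
  obtain ⟨hk1, hkM⟩ := Finset.mem_Icc.mp hk
  have hbid := hb.1
  have hle : bext M b (k + 1) ≤ b k := by
    by_cases h : k + 1 ≤ M
    · rw [bext_le h]; exact hbid.1 k hk1 (by omega)
    · rw [bext_gt' (by omega)]; exact bid_nonneg hbid hk1 hkM
  rcases lt_or_eq_of_le hle with h | htie
  · exact h
  exfalso
  have hRL : ∀ m, m ≤ M → Rpab M v b m ≤ Lpab M v b := fun m hm => R_le_L hm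
  have main : ∀ b' : ℕ → ℝ, IsBid M b' →
      (∀ m, m ≤ M → Rpab M v b' m < Lpab M v b) → False := by
    intro b' hb' hlt
    have h1 : Lpab M v b' < Lpab M v b := L_lt hlt
    have h2 := hb.2 b' hb'
    linarith
  obtain ⟨m₀, hm₀⟩ : ∃ m₀, k = m₀ + 1 := ⟨k - 1, by omega⟩
  have hbk0 : 0 ≤ b k := bid_nonneg hbid hk1 hkM
  have hM1 : (0:ℝ) < (M : ℝ) + 1 := by positivity
  have hMnn : (0:ℝ) ≤ (M : ℝ) := Nat.cast_nonneg M
  by_cases hc0 : b k = 0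
  · -- CASE 1 : the tie is at level 0
    have hzero : ∀ j, m₀ + 1 ≤ j → j ≤ M → b j = 0 := by
      intro j h1 h2
      have hle' : b j ≤ b k := bid_mono hbid hk1 (by omega) h2
      have hge : 0 ≤ b j := bid_nonneg hbid (by omega) h2
      rw [hc0] at hle'
      linarith
    set ε := v k / (2 * ((M:ℝ) + 1)) with hεdef
    have hε : 0 < ε := by positivity
    apply main (pert b M M ε 0) (isBid_pert_one hbid hε.le)
    intro m hmM
    have hS1 := S1 (v := v) (by omega : m₀ + 1 ≤ M) hzero
    have hpos : pos (v (m₀ + 1)) = v k := by rw [← hm₀]; exact pab_pos_of_nonneg hvk.le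
    have hRm₀ := hRL m₀ (by omega)
    rcases lt_or_eq_of_le hmM with hmlt | hmeq
    · by_cases hex : ∃ j, m + 1 ≤ j ∧ j ≤ M ∧ b (m + 1) < v j
      · obtain ⟨j₀, hj1, hj2, hj3⟩ := hex
        exact lt_of_lt_of_le (Z1b le_rfl (by omega) hε hj1 hj2 hj3) (hRL m hmM)
      · push_neg at hex
        have hsf := slack_flat hbid hmlt le_rfl hex
        have hZ := Z1a (v := v) (b := b) (W := M) (E := M) (m := m) (ε := ε) (η := 0)
          le_rfl (by omega) hε.le
        have hbM0 : b M = 0 := hzero M (by omega) le_rfl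
        linarith
    · have hZ3 := Z3 (v := v) (b := b) (W := M) (E := M) (m := m) (ε := ε) (η := 0)
        le_rfl (by omega : M ≤ m) hmM
      have hkey : ε * (2 * ((M:ℝ) + 1)) = v k := by
        rw [hεdef]; field_simp
      have hnum : (M : ℝ) * ε < v k := by nlinarith
      have hsimp : ((M : ℝ) * ε - ((M : ℝ) - (M : ℝ)) * 0) = (M : ℝ) * ε := by ring
      rw [hsimp] at hZ3
      have hRmM : Rpab M v b m = Rpab M v b M := by rw [hmeq]
      rw [hZ3, hRmM]
      linarith
  -- CASES 2/3 : the tie is at a positive level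
  have hc0' : 0 < b k := lt_of_le_of_ne hbk0 (Ne.symm hc0)
  have hk1M : k + 1 ≤ M := by
    by_contra h
    have h0 : bext M b (k + 1) = 0 := bext_gt' (by omega)
    rw [h0] at htie
    exact hc0 htie.symm
  have hbk1 : b (k + 1) = b k := by
    have := bext_le (b := b) hk1M
    rw [← this]; exact htie
  set P : ℕ → Prop := fun l => k + 1 ≤ l ∧ ∀ j, k + 1 ≤ j → j ≤ l → b j = b k with hPdef
  have hPk1 : P (k + 1) := by
    refine ⟨le_rfl, fun j h1 h2 => ?_⟩
    have : j = k + 1 := by omega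
    rw [this]; exact hbk1
  set E := Nat.findGreatest P M with hEdef
  have hPE : P E := Nat.findGreatest_spec hk1M hPk1
  have hEM : E ≤ M := Nat.findGreatest_le M
  have hkE : k + 1 ≤ E := hPE.1
  have hbE : ∀ j, k ≤ j → j ≤ E → b j = b k := by
    intro j hj1 hj2
    rcases eq_or_lt_of_le hj1 with h | h
    · rw [← h]
    · exact hPE.2 j (by omega) hj2
  have hbc : ∀ j, m₀ + 1 ≤ j → j ≤ E → b j = b (m₀ + 1) := by
    intro j h1 h2
    rw [← hm₀]
    exact hbE j (by omega) h2
  have hB0 : 0 ≤ bext M b (E + 1) := bext_nonneg hbid (by omega)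
  have hBc : bext M b (E + 1) < b k := by
    by_cases hEM' : E = M
    · rw [hEM', bext_gt' (by omega)]; exact hc0'
    · have hEM'' : E + 1 ≤ M := by omega
      rw [bext_le hEM'']
      have hle' : b (E + 1) ≤ b E := hbid.1 E (by omega) (by omega)
      rw [hbE E (by omega) le_rfl] at hle'
      rcases lt_or_eq_of_le hle' with h | h
      · exact h
      · exfalso
        have hPE1 : P (E + 1) := by
          refine ⟨by omega, fun j h1 h2 => ?_⟩
          rcases Nat.lt_or_ge j (E + 1) with h3 | h3
          · exact hPE.2 j h1 (by omega)
          · have : j = E + 1 := by omega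
            rw [this]; exact h
        exact Nat.findGreatest_is_greatest (by omega) hEM'' hPE1
  by_cases hcase : b k < v k
  · -- CASE 2 : 0 < b k < v k
    set B := bext M b (E + 1) with hBdef
    set η := min ((v k - b k) / (4 * ((M:ℝ) + 1))) ((b k - B) / 2) with hηdef
    have hη : 0 < η := lt_min (div_pos (by linarith) (by positivity))
      (div_pos (by linarith) two_pos)
    have hη1 : η * (4 * ((M:ℝ) + 1)) ≤ v k - b k := by
      have h := min_le_left ((v k - b k) / (4 * ((M:ℝ) + 1))) ((b k - B) / 2)
      rw [← hηdef] at h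
      rw [le_div_iff₀ (by positivity)] at h
      exact h
    have hη2 : η ≤ (b k - B) / 2 := by
      have h := min_le_right ((v k - b k) / (4 * ((M:ℝ) + 1))) ((b k - B) / 2)
      rw [← hηdef] at h; exact h
    set ε := η / ((M:ℝ) + 1) with hεdef
    have hε : 0 < ε := by positivity
    have hεη : ε ≤ η := by rw [hεdef]; exact div_le_self hη.le (by linarith)
    have hεM : ε * ((M:ℝ) + 1) = η := by rw [hεdef]; field_simp
    have hq : bext M b (E + 1) + η ≤ b E := by
      rw [hbE E (by omega) le_rfl, ← hBdef]
      linarith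
    apply main (pert b k E ε η) (isBid_pert hbid (by omega) hEM hε.le hη.le hq)
    intro m hmM
    by_cases hz1 : m + 1 ≤ k
    · by_cases hex : ∃ j, m + 1 ≤ j ∧ j ≤ M ∧ b (m + 1) < v j
      · obtain ⟨j₀, hj1, hj2, hj3⟩ := hex
        exact lt_of_lt_of_le (Z1b hkM hz1 hε hj1 hj2 hj3) (hRL m hmM)
      · push_neg at hex
        have hsf := slack_flat hbid (by omega : m < k) hkM hex
        have hZ := Z1a (v := v) (b := b) (W := k) (E := E) (m := m) (ε := ε) (η := η)
          hkM hz1 hε.le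
        have hRM := hRL M le_rfl
        linarith
    · by_cases hz2 : m + 1 ≤ E
      · have hZ2 := Z2 (v := v) (b := b) (W := k) (E := E) (m := m) (ε := ε) (η := η)
          hEM (by omega) hz2 hε.le hη.le
        have hS2 := S2 (v := v) (show m₀ + 1 ≤ m by omega) hz2 hEM hbc
        have hposS : pos (v (m₀ + 1) - b (m₀ + 1)) = v k - b k := by
          rw [← hm₀]; exact pab_pos_of_nonneg (by linarith)
        rw [hposS] at hS2
        have hnum := num1 (Mr := (M:ℝ)) hMnn (by linarith : (0:ℝ) < v k - b k)
          hη hε.le hεη hη1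
        have hRm₀ := hRL m₀ (by omega)
        linarith
      · have hZ3 := Z3 (v := v) (b := b) (ε := ε) (η := η)
          (show k ≤ E by omega) (show E ≤ m by omega) hmM
        have hnum := num2 (Mr := (M:ℝ)) (Wr := (k:ℝ)) (Er := (E:ℝ))
          (by exact_mod_cast hkM) (Nat.cast_nonneg k)
          (by exact_mod_cast hkE) hη hε hεM
        have := hRL m hmM
        linarith
  · -- CASE 3 : 0 < b k, v k ≤ b k
    have hvkc : v k ≤ b k := not_lt.mp hcase
    set B := bext M b (E + 1) with hBdef
    set η := min (b k / (4 * ((M:ℝ) + 1))) ((b k - B) / 2) with hηdef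
    have hη : 0 < η := lt_min (div_pos (by linarith) (by positivity))
      (div_pos (by linarith) two_pos)
    have hη1 : η * (4 * ((M:ℝ) + 1)) ≤ b k := by
      have h := min_le_left (b k / (4 * ((M:ℝ) + 1))) ((b k - B) / 2)
      rw [← hηdef] at h
      rw [le_div_iff₀ (by positivity)] at h
      exact h
    have hη2 : η ≤ (b k - B) / 2 := by
      have h := min_le_right (b k / (4 * ((M:ℝ) + 1))) ((b k - B) / 2)
      rw [← hηdef] at h; exact h
    set ε := η / ((M:ℝ) + 1) with hεdef
    have hε : 0 < ε := by positivity
    have hεη : ε ≤ η := by rw [hεdef]; exact div_le_self hη.le (by linarith)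
    have hεM : ε * ((M:ℝ) + 1) = η := by rw [hεdef]; field_simp
    have hq : bext M b (E + 1) + η ≤ b E := by
      rw [hbE E (by omega) le_rfl, ← hBdef]
      linarith
    apply main (pert b m₀ E ε η) (isBid_pert hbid (by omega) hEM hε.le hη.le hq)
    intro m hmM
    by_cases hz1 : m + 1 ≤ m₀
    · by_cases hex : ∃ j, m + 1 ≤ j ∧ j ≤ M ∧ b (m + 1) < v j
      · obtain ⟨j₀, hj1, hj2, hj3⟩ := hex
        exact lt_of_lt_of_le (Z1b (by omega : m₀ ≤ M) hz1 hε hj1 hj2 hj3) (hRL m hmM)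
      · push_neg at hex
        have hsf := slack_flat hbid (by omega : m < k) hkM hex
        have hZ := Z1a (v := v) (b := b) (W := m₀) (E := E) (m := m) (ε := ε) (η := η)
          (by omega : m₀ ≤ M) hz1 hε.le
        have hRM := hRL M le_rfl
        linarith
    · by_cases hz2 : m + 1 ≤ E
      · have hZ2 := Z2 (v := v) (b := b) (W := m₀) (E := E) (m := m) (ε := ε) (η := η)
          hEM (by omega) hz2 hε.le hη.le
        have hS3 := S3 hbid hv (show m₀ ≤ m by omega) hz2 hEM hbc
          (by rw [← hm₀]; exact hvkc)
        have hb' : b (m₀ + 1) = b k := by rw [← hm₀]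
        rw [hb'] at hS3
        have hnum := num1 (Mr := (M:ℝ)) hMnn hc0' hη hε.le hεη hη1
        have hRM := hRL M le_rfl
        linarith
      · have hZ3 := Z3 (v := v) (b := b) (ε := ε) (η := η)
          (show m₀ ≤ E by omega) (show E ≤ m by omega) hmM
        have hnum := num2 (Mr := (M:ℝ)) (Wr := (m₀:ℝ)) (Er := (E:ℝ))
          (by exact_mod_cast (by omega : m₀ ≤ M)) (Nat.cast_nonneg m₀)
          (by exact_mod_cast (by omega : m₀ + 1 ≤ E)) hη hε hεM
        have := hRL m hmM
        linarith


end

end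
end

section
/- Suppose the value vector is relatively flat, in the sense that Σ_{j=1}^M (M/(M+1))^{j−1} v_j ≤ (M+1) v_M. Then the vector b defined by b_k = (1/(M+1)) Σ_{j=k}^M (M/(M+1))^{j−k} v_j for k ∈ {1,…,M} satisfies b_M = v_M/(M+1) and, for every k ∈ {1,…,M−1}, the implicit equation k·(b_k − b_{k+1}) = (v_k − b_k) + Σ_{j=k+1}^M [ (v_j − b_k)_+ − (v_j − b_{k+1})_+ ]; hence b is the unique minimax-loss bid vector in the multi-unit pay-as-bid auction. -/
/-!
The closed form solves `(M + 1) b_k = v_k + M b_{k+1}` with `b_{M+1} = 0`, and flatness says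
exactly `b_1 ≤ v_M`; the recursion then propagates `b_k ≤ v_M ≤ v_j`, so `b` is a bid and none of
the positive parts in its regrets is truncated.

Replacing `(v_j − c_{k+1})₊` by `v_j − c_{k+1}` bounds each regret `R_k(c)` below by a function
`S_k(c)` that is affine in `c`, with equality at `c = b`, and the recursion makes `S_k(b)`
independent of `k`, hence equal to `L(b)`. So `L(c) ≤ L(b)` gives `S_k(c) ≤ S_k(b)` for all `k`.
For the partial sums `P_k = Σ_{j ≤ k} (c_j − b_j)` this says `(M + 1) P_k ≤ M P_{k+1}` for `k < M`
and `P_M ≤ 0`; with `P_0 = 0` it forces `P = 0`, that is `c = b` on `{1, …, M}`.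
-/

noncomputable section

open Finset

lemma antitoneOn_Icc_of_succ_le {α : Type*} [Preorder α] {M : ℕ} {f : ℕ → α}
    (hf : ∀ k, 1 ≤ k → k < M → f (k + 1) ≤ f k) : AntitoneOn f (Set.Icc 1 M) :=
  antitoneOn_of_succ_le Set.ordConnected_Icc fun k _ hk hk' => by
    rw [Order.succ_eq_add_one, Set.mem_Icc] at hk'
    exact hf k hk.1 (by omega)

lemma eq_zero_of_mul_le_mul_succ {P : ℕ → ℝ} {a c : ℝ} {n : ℕ} (ha : 0 < a) (hc : 0 < c)
    (h0 : P 0 = 0) (hn : P n ≤ 0) (hstep : ∀ k < n, a * P k ≤ c * P (k + 1)) :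
    ∀ k ≤ n, P k = 0 := by
  have hnonneg : ∀ k ≤ n, 0 ≤ P k := by
    intro k hk
    induction k with
    | zero => exact h0.ge
    | succ k ih => nlinarith [hstep k hk, ih (by omega)]
  have hnonpos : ∀ k ≤ n, P k ≤ 0 := fun k hk => by
    induction hk using Nat.decreasingInduction with
    | self => exact hn
    | of_succ k hk ih => nlinarith [hstep k hk]
  exact fun k hk => le_antisymm (hnonpos k hk) (hnonneg k hk)

lemma pos_eq_self {x : ℝ} (hx : 0 ≤ x) : pos x = x := max_eq_left hx

section Regret

variable {M k : ℕ} {v c : ℕ → ℝ}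

lemma bext_of_le (h : k ≤ M) : bext M c k = c k := if_pos h

lemma bext_of_lt (h : M < k) : bext M c k = 0 := if_neg h.not_ge

def linRegret (M : ℕ) (v c : ℕ → ℝ) (k : ℕ) : ℝ :=
  (∑ j ∈ Icc 1 k, c j) + (∑ j ∈ Icc (k + 1) M, v j) - M * bext M c (k + 1)

lemma Rpab_eq_linRegret_add (hk : k ≤ M) :
    Rpab M v c k = linRegret M v c k +
      ∑ j ∈ Icc (k + 1) M, (pos (v j - bext M c (k + 1)) - (v j - bext M c (k + 1))) := by
  simp only [Rpab, linRegret, sum_sub_distrib, sum_const, Nat.card_Icc, nsmul_eq_mul]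
  push_cast [Nat.add_sub_cancel, Nat.add_sub_add_right, Nat.cast_sub hk]
  ring

lemma linRegret_le_Rpab (hk : k ≤ M) : linRegret M v c k ≤ Rpab M v c k := by
  rw [Rpab_eq_linRegret_add hk, le_add_iff_nonneg_right]
  exact sum_nonneg fun j _ => sub_nonneg.2 (le_max_left _ _)

lemma Rpab_eq_linRegret (hk : k ≤ M) (hc : ∀ j ∈ Icc (k + 1) M, bext M c (k + 1) ≤ v j) :
    Rpab M v c k = linRegret M v c k := by
  rw [Rpab_eq_linRegret_add hk, add_eq_left]
  exact sum_eq_zero fun j hj => sub_eq_zero.2 (pos_eq_self (sub_nonneg.2 (hc j hj)))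

lemma linRegret_succ (hk : k < M) :
    linRegret M v c (k + 1) =
      linRegret M v c k + c (k + 1) - v (k + 1) - M * (bext M c (k + 2) - bext M c (k + 1)) := by
  rw [linRegret, linRegret, sum_Icc_succ_top (by omega), Icc_eq_cons_Ioc (by omega : k + 1 ≤ M),
    sum_cons, ← Icc_add_one_left_eq_Ioc]
  ring

lemma Rpab_le_Lpab (hk : k ≤ M) : Rpab M v c k ≤ Lpab M v c :=
  le_sup' _ (by simpa using hk)

lemma Lpab_le_iff {x : ℝ} : Lpab M v c ≤ x ↔ ∀ k ≤ M, Rpab M v c k ≤ x := by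
  simp [Lpab]

lemma Lpab_congr {c' : ℕ → ℝ} (h : ∀ j ∈ Icc 1 M, c j = c' j) : Lpab M v c = Lpab M v c' := by
  refine sup'_congr _ rfl fun k hk => ?_
  have hbext : bext M c (k + 1) = bext M c' (k + 1) := by
    unfold bext
    split_ifs with hkM
    exacts [h _ (mem_Icc.2 ⟨by omega, hkM⟩), rfl]
  simp only [Rpab, hbext]
  congr 1
  exact sum_congr rfl fun j hj => by rw [h j (by grind)]

end Regret

lemma eqOn_of_linRegret_le {M : ℕ} {v b c : ℕ → ℝ}
    (h : ∀ k ≤ M, linRegret M v c k ≤ linRegret M v b k) : ∀ k ∈ Icc 1 M, c k = b k := by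
  intro k hk
  rw [mem_Icc] at hk
  set P : ℕ → ℝ := fun k => ∑ j ∈ Icc 1 k, (c j - b j) with hP
  have hdiff : ∀ k, linRegret M v c k - linRegret M v b k =
      P k - M * (bext M c (k + 1) - bext M b (k + 1)) := fun k => by
    simp only [linRegret, hP, sum_sub_distrib]
    ring
  have hP_succ : ∀ k, P (k + 1) = P k + (c (k + 1) - b (k + 1)) := fun k =>
    sum_Icc_succ_top (by omega) _
  have hzero := eq_zero_of_mul_le_mul_succ (P := P) (a := M + 1) (c := M) (n := M)
    (by positivity) (by exact_mod_cast (by omega : 0 < M)) (by simp [hP]) ?_ ?_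
  · have := hP_succ (k - 1)
    rw [Nat.sub_add_cancel hk.1, hzero k hk.2, hzero (k - 1) (by omega)] at this
    linarith
  · have := hdiff M
    simp only [bext_of_lt (Nat.lt_succ_self M), sub_zero, mul_zero] at this
    linarith [h M le_rfl]
  · intro j hj
    have := hdiff j
    rw [bext_of_le (by omega : j + 1 ≤ M), bext_of_le (by omega : j + 1 ≤ M)] at this
    linear_combination h j hj.le - this - M * hP_succ j

section ClosedFormBid

variable {M k : ℕ} {v : ℕ → ℝ}

def closedFormBid (M : ℕ) (v : ℕ → ℝ) (k : ℕ) : ℝ :=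
  (1 / (M + 1)) * ∑ j ∈ Icc k M, ((M : ℝ) / (M + 1)) ^ (j - k) * v j

lemma closedFormBid_succ_self : closedFormBid M v (M + 1) = 0 := by
  simp [closedFormBid]

lemma bext_closedFormBid (hk : k ≤ M + 1) :
    bext M (closedFormBid M v) k = closedFormBid M v k := by
  rcases hk.lt_or_eq with hk | rfl
  · exact bext_of_le (by omega)
  · rw [bext_of_lt (by omega), closedFormBid_succ_self]

lemma closedFormBid_rec (hk : k ≤ M) :
    (M + 1) * closedFormBid M v k = v k + M * closedFormBid M v (k + 1) := by
  have hshift : ∑ j ∈ Icc (k + 1) M, ((M : ℝ) / (M + 1)) ^ (j - k) * v j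
      = (M / (M + 1)) * ∑ j ∈ Icc (k + 1) M, ((M : ℝ) / (M + 1)) ^ (j - (k + 1)) * v j := by
    rw [mul_sum]
    refine sum_congr rfl fun j hj => ?_
    rw [show j - k = j - (k + 1) + 1 by grind, pow_succ]
    ring
  rw [closedFormBid, closedFormBid, Icc_eq_cons_Ioc hk, sum_cons, ← Icc_add_one_left_eq_Ioc,
    hshift]
  field_simp
  simp

lemma closedFormBid_self : closedFormBid M v M = v M / (M + 1) := by
  rw [eq_div_iff (by positivity), mul_comm, closedFormBid_rec le_rfl, closedFormBid_succ_self,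
    mul_zero, add_zero]

def RelativelyFlat (M : ℕ) (v : ℕ → ℝ) : Prop :=
  ∑ j ∈ Icc 1 M, ((M : ℝ) / (M + 1)) ^ (j - 1) * v j ≤ (M + 1) * v M

lemma RelativelyFlat.closedFormBid_one_le (hflat : RelativelyFlat M v) :
    closedFormBid M v 1 ≤ v M :=
  calc closedFormBid M v 1 ≤ (1 / (M + 1)) * ((M + 1) * v M) :=
        mul_le_mul_of_nonneg_left hflat (by positivity)
    _ = v M := by field_simp

lemma closedFormBid_le_last (hv : AntitoneOn v (Set.Icc 1 M)) (hflat : RelativelyFlat M v) :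
    ∀ k ∈ Icc 1 M, closedFormBid M v k ≤ v M := by
  intro k hk
  rw [mem_Icc] at hk
  induction k, hk.1 using Nat.le_induction with
  | base => exact hflat.closedFormBid_one_le
  | succ n hn ih =>
    have hvn : v M ≤ v n := hv ⟨hn, by omega⟩ ⟨by omega, le_rfl⟩ (by omega)
    have hM : (0 : ℝ) < M := by exact_mod_cast (by omega : 0 < M)
    nlinarith [ih ⟨hn, by omega⟩, closedFormBid_rec (v := v) (by omega : n ≤ M)]

lemma closedFormBid_le (hv : AntitoneOn v (Set.Icc 1 M)) (hflat : RelativelyFlat M v)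
    {j : ℕ} (hk : k ∈ Icc 1 M) (hj : j ∈ Icc 1 M) : closedFormBid M v k ≤ v j := by
  rw [mem_Icc] at hj
  exact (closedFormBid_le_last hv hflat k hk).trans (hv hj ⟨hj.1.trans hj.2, le_rfl⟩ hj.2)

lemma isBid_closedFormBid (hv : AntitoneOn v (Set.Icc 1 M))
    (hflat : RelativelyFlat M v)
    (hvM : 0 ≤ v M) : IsBid M (closedFormBid M v) := by
  refine ⟨fun k hk hkM => ?_, by rw [closedFormBid_self]; positivity⟩
  have hbv := closedFormBid_le hv hflat (k := k + 1) (mem_Icc.2 ⟨by omega, hkM⟩)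
    (mem_Icc.2 ⟨hk, hkM.le⟩)
  nlinarith [closedFormBid_rec (v := v) hkM.le]

lemma closedFormBid_implicit_eq (hv : AntitoneOn v (Set.Icc 1 M))
    (hflat : RelativelyFlat M v)
    (hk : 1 ≤ k) (hkM : k < M) :
    (k : ℝ) * (closedFormBid M v k - closedFormBid M v (k + 1)) =
      (v k - closedFormBid M v k) + ∑ j ∈ Icc (k + 1) M,
        (pos (v j - closedFormBid M v k) - pos (v j - closedFormBid M v (k + 1))) := by
  have hterm : ∀ j ∈ Icc (k + 1) M,
      pos (v j - closedFormBid M v k) - pos (v j - closedFormBid M v (k + 1)) =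
        closedFormBid M v (k + 1) - closedFormBid M v k := fun j hj => by
    have hj' : j ∈ Icc 1 M := mem_Icc.2 ⟨by grind, (mem_Icc.1 hj).2⟩
    rw [pos_eq_self (sub_nonneg.2 (closedFormBid_le hv hflat (mem_Icc.2 ⟨hk, hkM.le⟩) hj')),
      pos_eq_self (sub_nonneg.2 (closedFormBid_le hv hflat (mem_Icc.2 ⟨by omega, hkM⟩) hj'))]
    ring
  rw [sum_congr rfl hterm, sum_const, Nat.card_Icc, nsmul_eq_mul, Nat.add_sub_add_right,
    Nat.cast_sub hkM.le]
  linear_combination closedFormBid_rec (v := v) hkM.le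

lemma linRegret_closedFormBid (hk : k ≤ M) :
    linRegret M v (closedFormBid M v) k = linRegret M v (closedFormBid M v) 0 := by
  induction k with
  | zero => rfl
  | succ k ih =>
    rw [linRegret_succ (by omega), ih (by omega), bext_closedFormBid (by omega),
      bext_closedFormBid (by omega)]
    linear_combination closedFormBid_rec (v := v) (by omega : k + 1 ≤ M)

lemma Lpab_closedFormBid_le (hv : AntitoneOn v (Set.Icc 1 M))
    (hflat : RelativelyFlat M v)
    (hk : k ≤ M) : Lpab M v (closedFormBid M v) ≤ linRegret M v (closedFormBid M v) k := by
  refine Lpab_le_iff.2 fun i hi => ?_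
  rw [Rpab_eq_linRegret hi fun j hj => ?_, linRegret_closedFormBid hi, linRegret_closedFormBid hk]
  rw [bext_closedFormBid (by omega)]
  exact closedFormBid_le hv hflat (mem_Icc.2 ⟨by omega, by grind⟩) (mem_Icc.2 ⟨by grind, by grind⟩)

lemma eqOn_closedFormBid_of_Lpab_le (hv : AntitoneOn v (Set.Icc 1 M))
    (hflat : RelativelyFlat M v)
    {c : ℕ → ℝ} (h : Lpab M v c ≤ Lpab M v (closedFormBid M v)) :
    ∀ k ∈ Icc 1 M, c k = closedFormBid M v k :=
  eqOn_of_linRegret_le fun _ hk => (linRegret_le_Rpab hk).trans <|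
    (Rpab_le_Lpab hk).trans <| h.trans (Lpab_closedFormBid_le hv hflat hk)

lemma isMinimaxPAB_closedFormBid (hv : AntitoneOn v (Set.Icc 1 M))
    (hflat : RelativelyFlat M v)
    (hvM : 0 ≤ v M) : IsMinimaxPAB M v (closedFormBid M v) :=
  ⟨isBid_closedFormBid hv hflat hvM, fun _ _ => le_of_not_gt fun hlt =>
    hlt.ne (Lpab_congr (eqOn_closedFormBid_of_Lpab_le hv hflat hlt.le))⟩

end ClosedFormBid

theorem minimax_pab_flat_values_closed_form_general
    (M : ℕ) (v : ℕ → ℝ) (hv : IsVal M v)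
    (hflat : ∑ j ∈ Finset.Icc 1 M, ((M : ℝ) / (M + 1)) ^ (j - 1) * v j ≤ (M + 1) * v M)
    (b : ℕ → ℝ)
    (hbdef : ∀ k, b k = (1 / (M + 1)) * ∑ j ∈ Finset.Icc k M, ((M : ℝ) / (M + 1)) ^ (j - k) * v j) :
    b M = v M / (M + 1) ∧
    (∀ k, 1 ≤ k → k < M →
      (k : ℝ) * (b k - b (k + 1)) =
        (v k - b k) +
          ∑ j ∈ Finset.Icc (k + 1) M, (pos (v j - b k) - pos (v j - b (k + 1)))) ∧
    IsMinimaxPAB M v b ∧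
    (∀ b', IsMinimaxPAB M v b' → ∀ k ∈ Finset.Icc 1 M, b' k = b k) := by
  obtain rfl : b = closedFormBid M v := funext hbdef
  have hva := antitoneOn_Icc_of_succ_le hv.1
  exact ⟨closedFormBid_self, fun _ hk hkM => closedFormBid_implicit_eq hva hflat hk hkM,
    isMinimaxPAB_closedFormBid hva hflat hv.2,
    fun _ hb' =>
      eqOn_closedFormBid_of_Lpab_le hva hflat (hb'.2 _ (isBid_closedFormBid hva hflat hv.2))⟩

/-- with a relatively flat value vector, the explicit formula
`b_k = (1/(M+1)) Σ_{j=k}^M (M/(M+1))^{j−k} v_j` satisfies `b_M = v_M/(M+1)` and the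
implicit equations, and it is the unique minimax-loss bid in the pay-as-bid auction. -/
theorem minimax_pab_flat_values_closed_form
    (M : ℕ) (hM : 1 ≤ M) (v : ℕ → ℝ) (hv : IsVal M v)
    (hflat : ∑ j ∈ Finset.Icc 1 M, ((M : ℝ) / (M + 1)) ^ (j - 1) * v j ≤ (M + 1) * v M)
    (b : ℕ → ℝ)
    (hbdef : ∀ k, b k = (1 / (M + 1)) * ∑ j ∈ Finset.Icc k M, ((M : ℝ) / (M + 1)) ^ (j - k) * v j) :
    b M = v M / (M + 1) ∧
    (∀ k, 1 ≤ k → k < M →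
      (k : ℝ) * (b k - b (k + 1)) =
        (v k - b k) +
          ∑ j ∈ Finset.Icc (k + 1) M, (pos (v j - b k) - pos (v j - b (k + 1)))) ∧
    IsMinimaxPAB M v b ∧
    (∀ b', IsMinimaxPAB M v b' → ∀ k ∈ Finset.Icc 1 M, b' k = b k) :=
  minimax_pab_flat_values_closed_form_general M v hv hflat b hbdef

end
end

section
/- There exists a unique vector b^LAB ∈ ℝ^M satisfying, for every k ∈ {1,…,M}, the equation k·b^LAB_k = Σ_{j=k}^M (v_j − b^LAB_k)_+. Moreover b^LAB_1 ≥ b^LAB_2 ≥ … ≥ b^LAB_M ≥ 0, so b^LAB is a bid vector (the unique cross-conditional regret minimizing bid), and b^LAB minimizes L^LAB over all bid vectors (i.e., it is a minimax-loss bid in the multi-unit uniform-price auction). -/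
noncomputable section

/-- Overbidding regret at quantity `k ∈ {1,…,M}` in the multi-unit uniform-price auction:
`O_k(b) = k·b_k`. -/
def Olab (b : ℕ → ℝ) (k : ℕ) : ℝ := (k : ℝ) * b k

/-- Underbidding regret at quantity `k − 1` in the multi-unit uniform-price auction:
`U_{k−1}(b) = Σ_{j=k}^M (v_j − b_k)₊`. -/
def Ulab (M : ℕ) (v b : ℕ → ℝ) (k : ℕ) : ℝ :=
  ∑ j ∈ Finset.Icc k M, pos (v j - b k)

/-- Maximum loss in the multi-unit uniform-price auction:
`L^LAB(b) = max_{1 ≤ k ≤ M} max(O_k(b), U_{k−1}(b))`. -/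
def Llab (M : ℕ) (hM : 1 ≤ M) (v b : ℕ → ℝ) : ℝ :=
  (Finset.Icc 1 M).sup' (Finset.nonempty_Icc.mpr hM)
    (fun k => max (Olab b k) (Ulab M v b k))

/-- A cross-conditional regret minimizing bid: `k·b_k = Σ_{j=k}^M (v_j − b_k)₊` for all
`k ∈ {1,…,M}`. -/
def IsCrossCond (M : ℕ) (v b : ℕ → ℝ) : Prop :=
  ∀ k ∈ Finset.Icc 1 M, (k : ℝ) * b k = ∑ j ∈ Finset.Icc k M, pos (v j - b k)

/-- A minimax-loss bid in the multi-unit uniform-price auction. -/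
def IsMinimaxLAB (M : ℕ) (hM : 1 ≤ M) (v b : ℕ → ℝ) : Prop :=
  IsBid M b ∧ ∀ b', IsBid M b' → Llab M hM v b ≤ Llab M hM v b'

/-- Auxiliary: `v` is antitone on `{1,…,M}`. -/
lemma val_mono {M : ℕ} {v : ℕ → ℝ} (hv : IsVal M v) {k j : ℕ}
    (hk : 1 ≤ k) (hkj : k ≤ j) (hjM : j ≤ M) : v j ≤ v k := by
  induction j with
  | zero => omega
  | succ n ih =>
    rcases Nat.lt_or_ge k (n+1) with h | h
    · exact (hv.1 n (by omega) (by omega)).trans (ih (by omega) (by omega))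
    · have : k = n+1 := by omega
      simp [this]

/-- The defect function whose root defines `b k`. -/
def Fdef (M : ℕ) (v : ℕ → ℝ) (k : ℕ) (x : ℝ) : ℝ :=
  (k : ℝ) * x - ∑ j ∈ Finset.Icc k M, pos (v j - x)

lemma Fdef_strictMono (M k : ℕ) (v : ℕ → ℝ) (hk : 1 ≤ k) : StrictMono (Fdef M v k) := by
  intro x y hxy
  unfold Fdef
  have hkpos : (0:ℝ) < k := by exact_mod_cast hk
  have h1 : (k:ℝ) * x < (k:ℝ) * y := mul_lt_mul_of_pos_left hxy hkpos
  have h2 : ∑ j ∈ Finset.Icc k M, pos (v j - y) ≤ ∑ j ∈ Finset.Icc k M, pos (v j - x) :=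
    Finset.sum_le_sum fun j _ => max_le_max (by linarith) le_rfl
  linarith

lemma Fdef_continuous (M k : ℕ) (v : ℕ → ℝ) : Continuous (Fdef M v k) := by
  unfold Fdef pos
  exact (continuous_const.mul continuous_id).sub
    (continuous_finset_sum _ fun j _ =>
      (continuous_const.sub continuous_id).max continuous_const)

lemma Fdef_root {M : ℕ} {v : ℕ → ℝ} (hv : IsVal M v) (k : ℕ) (hk : 1 ≤ k) (hkM : k ≤ M) :
    ∃ x, 0 ≤ x ∧ Fdef M v k x = 0 := by
  set c := max (v k) 0 with hc
  have hc0 : 0 ≤ c := le_max_right _ _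
  have hF0 : Fdef M v k 0 ≤ 0 := by
    unfold Fdef
    simp only [mul_zero, zero_sub, neg_nonpos]
    exact Finset.sum_nonneg fun j _ => le_max_right _ _
  have hFc : 0 ≤ Fdef M v k c := by
    unfold Fdef
    have hz : ∑ j ∈ Finset.Icc k M, pos (v j - c) = 0 := by
      apply Finset.sum_eq_zero
      intro j hj
      simp only [Finset.mem_Icc] at hj
      have hvj : v j ≤ v k := val_mono hv hk hj.1 hj.2
      have hle : v j - c ≤ 0 := by
        have : v k ≤ c := le_max_left _ _
        linarith
      simp [pos, max_eq_right hle]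
    rw [hz]
    have : (0:ℝ) ≤ (k:ℝ) := by positivity
    simpa using mul_nonneg this hc0
  have hmem : (0:ℝ) ∈ Set.Icc (Fdef M v k 0) (Fdef M v k c) := ⟨hF0, hFc⟩
  obtain ⟨x, hx, hfx⟩ :=
    intermediate_value_Icc hc0 (Fdef_continuous M k v).continuousOn hmem
  exact ⟨x, hx.1, hfx⟩

/-- there is a unique vector satisfying the cross-conditional equations
`k·b_k = Σ_{j=k}^M (v_j − b_k)₊` for all `k ∈ {1,…,M}`; it is a bid vector and it
minimizes `L^LAB` over all bid vectors. -/
theorem cross_conditional_bid_exists_unique_and_minimax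
    (M : ℕ) (hM : 1 ≤ M) (v : ℕ → ℝ) (hv : IsVal M v) :
    ∃ b : ℕ → ℝ, IsCrossCond M v b ∧
      (∀ b', IsCrossCond M v b' → ∀ k ∈ Finset.Icc 1 M, b' k = b k) ∧
      IsBid M b ∧
      (∀ b', IsBid M b' → Llab M hM v b ≤ Llab M hM v b') := by
  classical
  have hroot : ∀ k, 1 ≤ k → k ≤ M → ∃ x, 0 ≤ x ∧ Fdef M v k x = 0 :=
    fun k h1 h2 => Fdef_root hv k h1 h2
  set b : ℕ → ℝ := fun k => if h : 1 ≤ k ∧ k ≤ M then (hroot k h.1 h.2).choose else 0 with hbdef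
  have hb0 : ∀ k, 1 ≤ k → k ≤ M → 0 ≤ b k := by
    intro k h1 h2
    simp only [hbdef, dif_pos (And.intro h1 h2)]
    exact (hroot k h1 h2).choose_spec.1
  have hbeq : ∀ k, 1 ≤ k → k ≤ M → Fdef M v k (b k) = 0 := by
    intro k h1 h2
    simp only [hbdef, dif_pos (And.intro h1 h2)]
    exact (hroot k h1 h2).choose_spec.2
  have hbeq' : ∀ k, 1 ≤ k → k ≤ M →
      (k:ℝ) * b k = ∑ j ∈ Finset.Icc k M, pos (v j - b k) := by
    intro k h1 h2
    have := hbeq k h1 h2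
    unfold Fdef at this
    linarith
  have hcc : IsCrossCond M v b := by
    intro k hk
    simp only [Finset.mem_Icc] at hk
    exact hbeq' k hk.1 hk.2
  have hmono : ∀ k, 1 ≤ k → k < M → b (k+1) ≤ b k := by
    intro k h1 h2
    have hsm := Fdef_strictMono M (k+1) v (by omega)
    rw [← hsm.le_iff_le]
    rw [hbeq (k+1) (by omega) (by omega)]
    have hsplit : ∑ j ∈ Finset.Icc k M, pos (v j - b k)
        = pos (v k - b k) + ∑ j ∈ Finset.Icc (k+1) M, pos (v j - b k) := by
      rw [Finset.Icc_eq_cons_Ioc (by omega : k ≤ M), Finset.sum_cons, Finset.Icc_add_one_left_eq_Ioc]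
    have heqk := hbeq' k h1 (by omega)
    have hposk : 0 ≤ pos (v k - b k) := le_max_right _ _
    have hbk0 : 0 ≤ b k := hb0 k h1 (by omega)
    unfold Fdef
    push_cast
    rw [hsplit] at heqk
    linarith
  have hbid : IsBid M b := ⟨hmono, hb0 M hM le_rfl⟩
  refine ⟨b, hcc, ?_, hbid, ?_⟩
  · intro b' hb' k hk
    simp only [Finset.mem_Icc] at hk
    have h1 : Fdef M v k (b' k) = 0 := by
      have := hb' k (by simp [Finset.mem_Icc]; omega)
      unfold Fdef
      linarith
    have h2 : Fdef M v k (b k) = 0 := hbeq k hk.1 hk.2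
    exact (Fdef_strictMono M k v hk.1).injective (by rw [h1, h2])
  · intro b' _
    unfold Llab
    apply Finset.sup'_le
    intro k hk
    have hk' := hk
    simp only [Finset.mem_Icc] at hk'
    have heq : Olab b k = Ulab M v b k := hbeq' k hk'.1 hk'.2
    have hle : max (Olab b' k) (Ulab M v b' k) ≤
        (Finset.Icc 1 M).sup' (Finset.nonempty_Icc.mpr hM)
          (fun k => max (Olab b' k) (Ulab M v b' k)) :=
      Finset.le_sup' (fun k => max (Olab b' k) (Ulab M v b' k)) hk
    rw [← heq, max_self]
    rcases le_or_gt (b k) (b' k) with h | h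
    · have : Olab b k ≤ Olab b' k := by
        unfold Olab
        have : (0:ℝ) ≤ (k:ℝ) := by positivity
        exact mul_le_mul_of_nonneg_left h this
      exact this.trans ((le_max_left _ _).trans hle)
    · have : Olab b k ≤ Ulab M v b' k := by
        rw [heq]
        unfold Ulab
        exact Finset.sum_le_sum fun j _ => max_le_max (by linarith) le_rfl
      exact this.trans ((le_max_right _ _).trans hle)


end
end

section
/- The unique cross-conditional regret minimizing bid b^LAB in the multi-unit uniform-price auction satisfies b^LAB_M = v_M/(M+1) and b^LAB_1 ≥ v_1/2; consequently its overbidding regret at quantity M is M·v_M/(M+1) and its underbidding regret at quantity 0 is at least v_1/2. -/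
noncomputable section

/-- the unique cross-conditional regret minimizing bid satisfies
`b_M = v_M/(M+1)` and `b_1 ≥ v_1/2`; consequently its overbidding regret at quantity `M`
is `M·v_M/(M+1)` and its underbidding regret at quantity `0` is at least `v_1/2`. -/
theorem cross_conditional_bid_endpoints
    (M : ℕ) (hM : 1 ≤ M) (v : ℕ → ℝ) (hv : IsVal M v)
    (b : ℕ → ℝ) (hb : IsBid M b) (hcc : IsCrossCond M v b) :
    b M = v M / (M + 1) ∧ v 1 / 2 ≤ b 1 ∧
    Olab b M = (M : ℝ) * v M / (M + 1) ∧ v 1 / 2 ≤ Ulab M v b 1 := by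
  have hMpos : (0 : ℝ) < M := by exact_mod_cast hM
  have hM1 : (0 : ℝ) < (M : ℝ) + 1 := by linarith
  -- k = M case
  have hMmem : M ∈ Finset.Icc 1 M := Finset.mem_Icc.mpr ⟨hM, le_refl M⟩
  have hccM := hcc M hMmem
  rw [Finset.Icc_self, Finset.sum_singleton] at hccM
  have hbM : b M = v M / (M + 1) := by
    rcases le_or_gt (v M) (b M) with h | h
    · have : pos (v M - b M) = 0 := by simp [pos, sub_nonpos.mpr h]
      rw [this] at hccM
      have hb0 : b M = 0 := by
        have := mul_eq_zero.mp hccM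
        rcases this with h1 | h1
        · exact absurd h1 (ne_of_gt hMpos)
        · exact h1
      have hv0 : v M = 0 := le_antisymm (hb0 ▸ h) hv.2
      rw [hb0, hv0]; ring
    · have : pos (v M - b M) = v M - b M := max_eq_left (by linarith)
      rw [this] at hccM
      field_simp
      linarith
  -- k = 1 case
  have h1mem : (1 : ℕ) ∈ Finset.Icc 1 M := Finset.mem_Icc.mpr ⟨le_refl 1, hM⟩
  have hcc1 := hcc 1 h1mem
  have hb1 : v 1 / 2 ≤ b 1 := by
    have hsum : pos (v 1 - b 1) ≤ ∑ j ∈ Finset.Icc 1 M, pos (v j - b 1) := by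
      apply Finset.single_le_sum (f := fun j => pos (v j - b 1))
      · intro i _; exact le_max_right _ _
      · exact h1mem
    have hge : v 1 - b 1 ≤ pos (v 1 - b 1) := le_max_left _ _
    have : v 1 - b 1 ≤ b 1 := by
      calc v 1 - b 1 ≤ pos (v 1 - b 1) := hge
        _ ≤ ∑ j ∈ Finset.Icc 1 M, pos (v j - b 1) := hsum
        _ = (1 : ℝ) * b 1 := by rw [← hcc1]; norm_num
        _ = b 1 := one_mul _
    linarith
  refine ⟨hbM, hb1, ?_, ?_⟩
  · unfold Olab; rw [hbM]; ring
  · unfold Ulab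
    calc v 1 / 2 ≤ b 1 := hb1
      _ = (1 : ℝ) * b 1 := (one_mul _).symm
      _ = ∑ j ∈ Finset.Icc 1 M, pos (v j - b 1) := by rw [← hcc1]; norm_num

end
end

section
/- Suppose the value vector is relatively flat, in the sense that Σ_{j=1}^M v_j ≤ (M+1) v_M. Then the vector b defined by b_k = (1/(M+1)) Σ_{j=k}^M v_j for k ∈ {1,…,M} satisfies k·b_k = Σ_{j=k}^M (v_j − b_k)_+ for every k ∈ {1,…,M}; hence b is the unique cross-conditional regret minimizing bid in the multi-unit uniform-price auction. -/
noncomputable section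

/-- with a relatively flat value vector, the explicit formula
`b_k = (1/(M+1)) Σ_{j=k}^M v_j` satisfies the cross-conditional equations, and is the
unique cross-conditional regret minimizing bid in the uniform-price auction. -/
theorem cross_conditional_flat_values_closed_form
    (M : ℕ) (hM : 1 ≤ M) (v : ℕ → ℝ) (hv : IsVal M v)
    (hflat : ∑ j ∈ Finset.Icc 1 M, v j ≤ (M + 1) * v M)
    (b : ℕ → ℝ)
    (hbdef : ∀ k, b k = (1 / (M + 1)) * ∑ j ∈ Finset.Icc k M, v j) :
    IsCrossCond M v b ∧ IsBid M b ∧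
    (∀ b', IsBid M b' → IsCrossCond M v b' → ∀ k ∈ Finset.Icc 1 M, b' k = b k) := by

  have hM1 : (0:ℝ) < (M:ℝ) + 1 := by positivity
  -- monotonicity of v
  have hmono : ∀ i j, 1 ≤ i → i ≤ j → j ≤ M → v j ≤ v i := by
    intro i j hi hij
    induction j, hij using Nat.le_induction with
    | base => intro _; exact le_rfl
    | succ n hn ih =>
      intro h
      have h1 : v (n + 1) ≤ v n := hv.1 n (hi.trans hn) (Nat.lt_of_succ_le h)
      have h2 : v n ≤ v i := ih (Nat.le_of_succ_le h)
      linarith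
  have hvnn : ∀ j, 1 ≤ j → j ≤ M → 0 ≤ v j := by
    intro j h1 h2
    exact le_trans hv.2 (hmono j M h1 h2 le_rfl)
  -- key identity : (M+1) * b k = sum
  have hbeq : ∀ k, ((M:ℝ) + 1) * b k = ∑ j ∈ Finset.Icc k M, v j := by
    intro k
    rw [hbdef k]
    field_simp
  -- b k ≤ v M for 1 ≤ k
  have hble : ∀ k, 1 ≤ k → b k ≤ v M := by
    intro k hk
    have hsub : Finset.Icc k M ⊆ Finset.Icc 1 M := Finset.Icc_subset_Icc hk le_rfl
    have hS : ∑ j ∈ Finset.Icc k M, v j ≤ ∑ j ∈ Finset.Icc 1 M, v j := by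
      apply Finset.sum_le_sum_of_subset_of_nonneg hsub
      intro j hj _
      exact hvnn j (Finset.mem_Icc.mp hj).1 (Finset.mem_Icc.mp hj).2
    have : ((M:ℝ) + 1) * b k ≤ ((M:ℝ) + 1) * v M := by
      rw [hbeq k]; linarith
    exact le_of_mul_le_mul_left this hM1
  -- the cross conditional property
  have hcc : IsCrossCond M v b := by
    intro k hk
    obtain ⟨hk1, hkM⟩ := Finset.mem_Icc.mp hk
    have hpos : ∀ j ∈ Finset.Icc k M, pos (v j - b k) = v j - b k := by
      intro j hj
      obtain ⟨hj1, hj2⟩ := Finset.mem_Icc.mp hj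
      have : v M ≤ v j := hmono j M (hk1.trans hj1) hj2 le_rfl
      have hbk : b k ≤ v j := le_trans (hble k hk1) this
      simp [pos, max_eq_left, sub_nonneg.mpr hbk]
    rw [Finset.sum_congr rfl hpos, Finset.sum_sub_distrib, Finset.sum_const,
      Nat.card_Icc]
    have hcard : ((M + 1 - k : ℕ) : ℝ) = (M:ℝ) + 1 - k := by
      have : k ≤ M + 1 := hkM.trans (Nat.le_succ M)
      push_cast [Nat.cast_sub this]
      ring
    rw [nsmul_eq_mul, hcard]
    have := hbeq k
    linarith
  refine ⟨hcc, ⟨?_, ?_⟩, ?_⟩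
  · -- decreasing
    intro k hk1 hkM
    have : ((M:ℝ) + 1) * b (k+1) ≤ ((M:ℝ) + 1) * b k := by
      rw [hbeq, hbeq]
      have hsplit : ∑ j ∈ Finset.Icc k M, v j
          = v k + ∑ j ∈ Finset.Icc (k+1) M, v j := by
        rw [Finset.Icc_eq_cons_Ioc (le_of_lt hkM), Finset.sum_cons, Finset.Icc_add_one_left_eq_Ioc]
      have hvk : 0 ≤ v k := hvnn k hk1 (le_of_lt hkM)
      linarith [hsplit]
    exact le_of_mul_le_mul_left this hM1
  · -- b M ≥ 0
    rw [hbdef M]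
    have : ∑ j ∈ Finset.Icc M M, v j = v M := by simp
    rw [this]
    have h0 : (0:ℝ) ≤ 1 / ((M:ℝ) + 1) := by positivity
    exact mul_nonneg h0 hv.2
  · -- uniqueness
    intro b' hb' hcc' k hk
    set g : ℝ → ℝ := fun t => (∑ j ∈ Finset.Icc k M, pos (v j - t)) - (k:ℝ) * t with hg
    have hk1 : 1 ≤ k := (Finset.mem_Icc.mp hk).1
    have hganti : StrictAnti g := by
      intro s t hst
      have hsum : ∑ j ∈ Finset.Icc k M, pos (v j - t)
          ≤ ∑ j ∈ Finset.Icc k M, pos (v j - s) := by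
        apply Finset.sum_le_sum
        intro j _
        exact max_le_max (by linarith) le_rfl
      have hkpos : (0:ℝ) < (k:ℝ) := by exact_mod_cast hk1
      have : (k:ℝ) * s < (k:ℝ) * t := by nlinarith
      simp only [hg]
      linarith
    have e1 : g (b' k) = 0 := by
      simp only [hg]; linarith [hcc' k hk]
    have e2 : g (b k) = 0 := by
      simp only [hg]; linarith [hcc k hk]
    exact hganti.injective (e1.trans e2.symm)


end
end
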